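/- arXiv:1206.5504 — 8 statements merged into one kernel-verified Lean document; each statement's English description precedes it below -/
import Mathlib

section
/- Let (V, B) be a symplectic vector space over ℂ and let C, C' be linear endomorphisms of V that are skew-symmetric with respect to B. Then the following are equivalent: (i) there exist an invertible linear map P : V → V and a nonzero scalar λ ∈ ℂ such that C' = λ • (P ∘ C ∘ P⁻¹) and B(P(C x), P y) = B(C x, y) for all x, y ∈ V; (ii) there exist an isometry Q of (V, B) and a nonzero scalar μ ∈ ℂ such that C' = μ • (Q ∘ C ∘ Q⁻¹). (This is the linear-algebra content of Theorem 2(i)/Proposition 3.4.13: two quadratic Lie superalgebra structures with 2-dimensional even part, realized as double extensions of (V, B) by C and C', are isomorphic if and only if they are isometrically isomorphic.) -/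
/-!
Given `P`, let `S = P†P` be the `B`-adjoint of `P` composed with `P`, so that
`B (S x) y = B (P x) (P y)`. Antisymmetry of `B` makes `S` self-adjoint, `P*P C = C` says
`S C = C`, and skew-symmetry of `C` then gives `C S = C`. An invertible operator over an
algebraically closed field of characteristic zero has a square root `R = p(S)` which is a
polynomial in `S`: locally at each (nonzero) root `λ = μ²` of the minimal polynomial,
`X = μ² (1 + (X - λ)/λ)` is a square modulo `(X - λ)^e` by the truncated binomial series of
`(1 + X)^(1/2)`, and the Chinese remainder theorem glues these. Being a polynomial in `S`, `R` is
self-adjoint and commutes with `C`, so `B (R x) (R y) = B (S x) y = B (P x) (P y)`; hence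
`Q = P R⁻¹` is an isometry with `Q C Q⁻¹ = P R⁻¹ C R P⁻¹ = P C P⁻¹`.
-/

open Function Polynomial

theorem IsCoprime.exists_mul_dvd_sq_sub {R : Type*} [CommRing R] {a b x : R} (hab : IsCoprime a b)
    (ha : ∃ p, a ∣ p ^ 2 - x) (hb : ∃ q, b ∣ q ^ 2 - x) : ∃ r, a * b ∣ r ^ 2 - x := by
  obtain ⟨p, hp⟩ := ha
  obtain ⟨q, hq⟩ := hb
  obtain ⟨u, v, huv⟩ := hab
  set r := p * (v * b) + q * (u * a)
  have hrp : a ∣ r - p := ⟨(q - p) * u, by linear_combination p * huv⟩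
  have hrq : b ∣ r - q := ⟨(p - q) * v, by linear_combination q * huv⟩
  refine ⟨r, IsCoprime.mul_dvd ⟨u, v, huv⟩ ?_ ?_⟩
  · rw [show r ^ 2 - x = (r - p) * (r + p) + (p ^ 2 - x) by ring]
    exact dvd_add (hrp.mul_right _) hp
  · rw [show r ^ 2 - x = (r - q) * (r + q) + (q ^ 2 - x) by ring]
    exact dvd_add (hrq.mul_right _) hq

theorem Finset.exists_prod_dvd_sq_sub {ι R : Type*} [CommRing R] {x : R} (s : Finset ι)
    (f : ι → R) (hs : (s : Set ι).Pairwise (IsCoprime on f))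
    (h : ∀ i ∈ s, ∃ p, f i ∣ p ^ 2 - x) : ∃ r, ∏ i ∈ s, f i ∣ r ^ 2 - x := by
  classical
  induction s using Finset.induction_on with
  | empty => exact ⟨0, by simp⟩
  | insert i s hi ih =>
    rw [Finset.coe_insert, Set.pairwise_insert] at hs
    rw [Finset.prod_insert hi]
    refine IsCoprime.exists_mul_dvd_sq_sub ?_ (h i (Finset.mem_insert_self i s))
      (ih hs.1 fun j hj => h j (Finset.mem_insert_of_mem hj))
    exact IsCoprime.prod_right fun j hj => (hs.2 j hj (ne_of_mem_of_not_mem hj hi).symm).1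

namespace Polynomial

theorem exists_X_pow_dvd_sq_sub_one_add_X {K : Type*} [Field K] [CharZero K] (N : ℕ) :
    ∃ s : K[X], X ^ N ∣ s ^ 2 - (1 + X) := by
  set b := PowerSeries.binomialSeries K (2⁻¹ : K)
  have hb : b ^ 2 = 1 + PowerSeries.X := by
    rw [sq, ← PowerSeries.binomialSeries_add, ← two_mul, mul_inv_cancel₀ two_ne_zero,
      ← Nat.cast_one, PowerSeries.binomialSeries_nat, pow_one]
  refine ⟨PowerSeries.trunc N b, X_pow_dvd_iff.2 fun d hd => ?_⟩
  have := congrArg (fun f => (PowerSeries.trunc N f).coeff d) hb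
  rw [← PowerSeries.trunc_trunc_pow] at this
  simp only [PowerSeries.coeff_trunc, if_pos hd] at this
  rw [coeff_sub, ← coeff_coe, ← coeff_coe, coe_pow, this]
  simp

theorem exists_X_sub_C_pow_dvd_sq_sub_X {K : Type*} [Field K] [CharZero K] {μ : K} (hμ : μ ≠ 0)
    (e : ℕ) : ∃ p : K[X], (X - C (μ ^ 2)) ^ e ∣ p ^ 2 - X := by
  obtain ⟨s, hs⟩ := exists_X_pow_dvd_sq_sub_one_add_X (K := K) e
  set n : K[X] := C (μ ^ 2)⁻¹ * (X - C (μ ^ 2))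
  have hX : C (μ ^ 2) * (1 + n) = X := by
    rw [mul_add, mul_one, ← mul_assoc, ← C_mul, mul_inv_cancel₀ (pow_ne_zero 2 hμ), C_1,
      one_mul, add_sub_cancel]
  refine ⟨C μ * aeval n s, ?_⟩
  have hdvd : n ^ e ∣ aeval n s ^ 2 - (1 + n) := by
    simpa using _root_.map_dvd (aeval n) hs
  calc (X - C (μ ^ 2)) ^ e ∣ C (μ ^ 2) * n ^ e :=
        ⟨C (μ ^ 2) * C (μ ^ 2)⁻¹ ^ e, by rw [mul_pow]; ring⟩
    _ ∣ C (μ ^ 2) * (aeval n s ^ 2 - (1 + n)) := mul_dvd_mul_left _ hdvd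
    _ = (C μ * aeval n s) ^ 2 - X := by rw [← hX, C_pow]; ring

theorem Monic.exists_dvd_sq_sub_X {K : Type*} [Field K] [IsAlgClosed K] [CharZero K] {f : K[X]}
    (hf : f.Monic) (h0 : ¬ f.IsRoot 0) : ∃ p : K[X], f ∣ p ^ 2 - X := by
  classical
  have hprod : ∏ a ∈ f.roots.toFinset, (X - C a) ^ f.roots.count a = f := by
    rw [← Finset.prod_multiset_map_count,
      prod_multiset_X_sub_C_of_monic_of_roots_card_eq hf IsAlgClosed.card_roots_eq_natDegree]
  rw [← hprod]
  refine Finset.exists_prod_dvd_sq_sub _ _ ?_ fun a ha => ?_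
  · exact fun a _ b _ hab => (pairwise_coprime_X_sub_C injective_id hab).pow
  · obtain ⟨μ, rfl⟩ := IsAlgClosed.exists_pow_nat_eq a two_pos
    have hμ : μ ≠ 0 := by
      rintro rfl
      exact h0 (isRoot_of_mem_roots (by simpa using Multiset.mem_toFinset.1 ha))
    exact exists_X_sub_C_pow_dvd_sq_sub_X hμ _

end Polynomial

namespace LinearMap.IsAdjointPair

variable {R M : Type*} [CommRing R] [AddCommGroup M] [Module R M] {B : LinearMap.BilinForm R M}
  {f : Module.End R M}

theorem pow (h : IsAdjointPair B B f f) (n : ℕ) : IsAdjointPair B B ⇑(f ^ n) ⇑(f ^ n) := by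
  induction n with
  | zero => exact isAdjointPair_one
  | succ n ih =>
    have := ih.mul h
    rwa [← pow_succ, ← pow_succ'] at this

theorem aeval (h : IsAdjointPair B B f f) (p : R[X]) :
    IsAdjointPair B B ⇑(aeval f p) ⇑(aeval f p) := by
  induction p using Polynomial.induction_on' with
  | add p q hp hq => rw [map_add]; exact hp.add hq
  | monomial n a =>
    rw [aeval_monomial, Algebra.algebraMap_eq_smul_one, smul_mul_assoc, one_mul]
    exact (h.pow n).smul a

end LinearMap.IsAdjointPair

theorem Module.End.exists_aeval_sq_eq {K V : Type*} [Field K] [IsAlgClosed K] [CharZero K]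
    [AddCommGroup V] [Module K V] [FiniteDimensional K V] {S : Module.End K V} (hS : IsUnit S) :
    ∃ p : K[X], aeval S p ^ 2 = S := by
  have h0 : ¬ (minpoly K S).IsRoot 0 := ((LinearMap.not_hasEigenvalue_zero_tfae S).out 1 4).2
    ((LinearMap.isUnit_iff_ker_eq_bot S).1 hS)
  obtain ⟨p, q, hq⟩ := (minpoly.monic (Algebra.IsIntegral.isIntegral S)).exists_dvd_sq_sub_X h0
  refine ⟨p, sub_eq_zero.1 ?_⟩
  simpa using congrArg (aeval S) hq

namespace LinearMap.BilinForm

variable {K V : Type*} [Field K] [AddCommGroup V] [Module K V] {B : LinearMap.BilinForm K V}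

theorem Nondegenerate.endomorphism_ext (hB : B.Nondegenerate) {f g : Module.End K V}
    (h : ∀ x y, B (f x) y = B (g x) y) : f = g :=
  LinearMap.ext fun x => sub_eq_zero.1 <| hB.1 _ fun y => by
    rw [map_sub, LinearMap.sub_apply, h, sub_self]

variable [FiniteDimensional K V]

theorem leftAdjointOfNondegenerate_mul_self_apply (hB : B.Nondegenerate) (P : Module.End K V)
    (x y : V) : B ((B.leftAdjointOfNondegenerate hB P * P) x) y = B (P x) (P y) :=
  isAdjointPairLeftAdjointOfNondegenerate B hB P (P x) y

theorem isAdjointPair_leftAdjointOfNondegenerate_mul_self (hB : B.Nondegenerate)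
    (hanti : ∀ x y, B x y = -B y x) (P : Module.End K V) :
    IsAdjointPair B B ⇑(B.leftAdjointOfNondegenerate hB P * P)
      ⇑(B.leftAdjointOfNondegenerate hB P * P) := fun x y => by
  rw [leftAdjointOfNondegenerate_mul_self_apply, hanti x,
    leftAdjointOfNondegenerate_mul_self_apply, hanti (P x)]

theorem isUnit_leftAdjointOfNondegenerate_mul_self (hB : B.Nondegenerate) (P : V ≃ₗ[K] V) :
    IsUnit (B.leftAdjointOfNondegenerate hB P * P) := by
  refine (LinearMap.isUnit_iff_ker_eq_bot _).2 (LinearMap.ker_eq_bot'.2 fun x hx => ?_)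
  refine P.map_eq_zero_iff.1 (hB.1 _ fun y => ?_)
  have := leftAdjointOfNondegenerate_mul_self_apply hB P x (P.symm y)
  rw [hx] at this
  simpa using this.symm

theorem exists_isometry_conj_eq (hB : B.Nondegenerate) (hanti : ∀ x y, B x y = -B y x)
    [IsAlgClosed K] [CharZero K] {C : Module.End K V} (hC : ∀ x y, B (C x) y = -B x (C y))
    (P : V ≃ₗ[K] V) (hP : ∀ x y, B (P (C x)) (P y) = B (C x) y) :
    ∃ Q : V ≃ₗ[K] V, (∀ x y, B (Q x) (Q y) = B x y) ∧
      ∀ x, Q (C (Q.symm x)) = P (C (P.symm x)) := by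
  set S := B.leftAdjointOfNondegenerate hB P * P
  have hS : ∀ x y, B (S x) y = B (P x) (P y) := leftAdjointOfNondegenerate_mul_self_apply hB P
  have hS_self : IsAdjointPair B B S S :=
    isAdjointPair_leftAdjointOfNondegenerate_mul_self hB hanti P
  have hSC : S * C = C := hB.endomorphism_ext fun x y => by
    rw [Module.End.mul_apply, hS, hP]
  have hCS : C * S = C := hB.endomorphism_ext fun x y => by
    rw [Module.End.mul_apply, hC, hS_self, ← Module.End.mul_apply, hSC, hC]
  have hS_unit : IsUnit S := isUnit_leftAdjointOfNondegenerate_mul_self hB P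
  obtain ⟨p, hp⟩ := Module.End.exists_aeval_sq_eq hS_unit
  set R := aeval S p
  have hR_self : IsAdjointPair B B R R := hS_self.aeval p
  have hCR : Commute C R := Algebra.commute_of_mem_adjoin_singleton_of_commute
    (aeval_mem_adjoin_singleton K S) (hCS.trans hSC.symm)
  have hR : IsUnit R := ((Commute.refl R).isUnit_mul_iff.1 (by rwa [← sq, hp])).1
  have hPR : ∀ u v, B (P u) (P v) = B (R u) (R v) := fun u v => by
    rw [← hS, ← hp, sq, Module.End.mul_apply, hR_self]
  set Re := LinearMap.GeneralLinearGroup.toLinearEquiv hR.unit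
  have hRe : ∀ u, Re u = R u := fun u => rfl
  refine ⟨Re.symm.trans P, fun x y => ?_, fun x => ?_⟩
  · rw [LinearEquiv.trans_apply, LinearEquiv.trans_apply, hPR, ← hRe, ← hRe,
      Re.apply_symm_apply, Re.apply_symm_apply]
  · rw [LinearEquiv.trans_apply, LinearEquiv.symm_trans_apply, LinearEquiv.symm_symm, hRe,
      ← Module.End.mul_apply, hCR.eq, Module.End.mul_apply, ← hRe, Re.symm_apply_apply]

end LinearMap.BilinForm

theorem stmt0_general {V : Type*} [AddCommGroup V] [Module ℂ V] [FiniteDimensional ℂ V]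
    (B : LinearMap.BilinForm ℂ V) (hB : B.Nondegenerate)
    (hBalt : ∀ x y : V, B x y = - B y x)
    (C C' : V →ₗ[ℂ] V)
    (hC : ∀ x y : V, B (C x) y = - B x (C y)) :
    (∃ (P : V ≃ₗ[ℂ] V) (lam : ℂ), lam ≠ 0 ∧
        (∀ x : V, C' x = lam • P (C (P.symm x))) ∧
        (∀ x y : V, B (P (C x)) (P y) = B (C x) y)) ↔
    (∃ (Q : V ≃ₗ[ℂ] V) (mu : ℂ), mu ≠ 0 ∧
        (∀ x y : V, B (Q x) (Q y) = B x y) ∧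
        (∀ x : V, C' x = mu • Q (C (Q.symm x)))) := by
  constructor
  · rintro ⟨P, lam, hlam, hC'_eq, hP⟩
    obtain ⟨Q, hQ_isometry, hQ_conj⟩ := B.exists_isometry_conj_eq hB hBalt hC P hP
    exact ⟨Q, lam, hlam, hQ_isometry, fun x => by rw [hC'_eq, hQ_conj]⟩
  · rintro ⟨Q, mu, hmu, hQ_isometry, hC'_eq⟩
    exact ⟨Q, mu, hmu, hC'_eq, fun x y => hQ_isometry (C x) y⟩

/-- For a symplectic vector space `(V, B)` over `ℂ` and skew-symmetric
endomorphisms `C, C'`, the existence of an invertible `P` and nonzero `λ` with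
`C' = λ • P C P⁻¹` and `P*P C = C` is equivalent to the existence of an isometry `Q`
and nonzero `μ` with `C' = μ • Q C Q⁻¹`. -/
theorem stmt0 {V : Type*} [AddCommGroup V] [Module ℂ V] [FiniteDimensional ℂ V]
    (B : LinearMap.BilinForm ℂ V) (hB : B.Nondegenerate)
    (hBalt : ∀ x y : V, B x y = - B y x)
    (C C' : V →ₗ[ℂ] V)
    (hC : ∀ x y : V, B (C x) y = - B x (C y))
    (hC' : ∀ x y : V, B (C' x) y = - B x (C' y)) :
    (∃ (P : V ≃ₗ[ℂ] V) (lam : ℂ), lam ≠ 0 ∧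
        (∀ x : V, C' x = lam • P (C (P.symm x))) ∧
        (∀ x y : V, B (P (C x)) (P y) = B (C x) y)) ↔
    (∃ (Q : V ≃ₗ[ℂ] V) (mu : ℂ), mu ≠ 0 ∧
        (∀ x y : V, B (Q x) (Q y) = B x y) ∧
        (∀ x : V, C' x = mu • Q (C (Q.symm x)))) :=
  stmt0_general B hB hBalt C C' hC
end

section
/- Let V be a finite-dimensional complex vector space with a nondegenerate bilinear form B that is either symmetric or alternating, and let C and C' be nilpotent endomorphisms of V, both skew-symmetric with respect to B. Then C and C' are conjugate by an isometry of (V, B) (i.e. there is an isometry P with C' = P ∘ C ∘ P⁻¹) if and only if C and C' are similar, i.e. conjugate by some invertible linear map of V. (This expresses that nilpotent O(m)-adjoint orbits of o(m), and nilpotent Sp(2n)-adjoint orbits of sp(2n), are determined by the Jordan partition, as in Proposition 1.2.10.) -/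
/-!
Let `g C g⁻¹ = C'` and let `A = g† g`, where `g†` is the `B`-adjoint of `g`. Then `A` is
invertible, `B`-self-adjoint (this is where `B` being symmetric or alternating enters), and
commutes with `C` (because `C` and `C'` are skew). Over an algebraically closed field of
characteristic not two, `A = k * k` for some `k` in the commutative subalgebra `K[A]`: modulo the
nilradical this algebra is a product of copies of `K`, and a square root there lifts by Newton's
method. Such a `k` is again self-adjoint and commutes with `C`, so `B (g x) (g y) = B (k x) (k y)`
and `P = g k⁻¹` is an isometry with `P C P⁻¹ = g C g⁻¹ = C'`.
-/

theorem isSquare_of_isReduced (K : Type*) {R : Type*} [Field K] [IsAlgClosed K] [CommRing R]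
    [IsReduced R] [Algebra K R] [Module.Finite K R] (x : R) : IsSquare x := by
  have : IsArtinianRing R := isArtinian_of_tower K inferInstance
  let e := IsArtinianRing.equivPi R
  suffices ∀ I : MaximalSpectrum R, IsSquare (e x I) by
    choose t ht using this
    exact ⟨e.symm t, e.injective <| by ext I; simpa using ht I⟩
  intro I
  let := Ideal.Quotient.field I.asIdeal
  have : Algebra.IsIntegral K (R ⧸ I.asIdeal) := Algebra.IsIntegral.of_finite K _
  obtain ⟨c, hc⟩ := (IsAlgClosed.algebraMap_bijective_of_isIntegral (k := K)).2 (e x I)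
  obtain ⟨z, rfl⟩ := IsAlgClosed.exists_eq_mul_self c
  exact ⟨algebraMap K _ z, by rw [← hc, map_mul]⟩

open Polynomial in
theorem isSquare_of_isUnit (K : Type*) {R : Type*} [Field K] [IsAlgClosed K] [NeZero (2 : K)]
    [CommRing R] [Algebra K R] [Module.Finite K R] {u : R} (hu : IsUnit u) : IsSquare u := by
  have : IsReduced (R ⧸ nilradical R) :=
    (Ideal.isRadical_iff_quotient_reduced _).mp (Ideal.radical_isRadical ⊥)
  obtain ⟨t, ht⟩ : ∃ t : R, IsNilpotent (t * t - u) := by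
    obtain ⟨t, ht⟩ := isSquare_of_isReduced K (Ideal.Quotient.mk (nilradical R) u)
    obtain ⟨t, rfl⟩ := Ideal.Quotient.mk_surjective t
    refine ⟨t, mem_nilradical.mp (Ideal.Quotient.eq.mp ?_)⟩
    rw [map_mul, ht]
  have htt : IsUnit (t * t) := by
    simpa using ht.isUnit_add_left_of_commute hu (Commute.all _ _)
  have h2 : IsUnit (2 : R) := by
    simpa only [map_ofNat] using (IsUnit.mk0 (2 : K) two_ne_zero).map (algebraMap K R)
  have hP : aeval t (derivative (X ^ 2 - C u)) = 2 * t := by simp [one_add_one_eq_two]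
  obtain ⟨r, -, hr⟩ := (existsUnique_nilpotent_sub_and_aeval_eq_zero (P := X ^ 2 - C u) (x := t)
    (by simpa [sq] using ht) (hP ▸ h2.mul (isUnit_of_mul_isUnit_left htt))).exists
  exact ⟨r, by simpa [sq, sub_eq_zero, eq_comm] using hr⟩

open scoped IsMulCommutative in
theorem Module.End.exists_mem_adjoin_eq_mul_self {K V : Type*} [Field K] [IsAlgClosed K]
    [NeZero (2 : K)] [AddCommGroup V] [Module K V] [FiniteDimensional K V] {f : Module.End K V}
    (hf : IsUnit f) : ∃ k ∈ Algebra.adjoin K {f}, f = k * k := by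
  set A := Algebra.adjoin K {f}
  have hfA : IsUnit (⟨f, Algebra.self_mem_adjoin_singleton K f⟩ : A) :=
    have : IsArtinianRing A := isArtinian_of_tower K inferInstance
    IsArtinianRing.isUnit_of_mem_nonZeroDivisors <| comap_nonZeroDivisors_le_of_injective
      (f := A.val) Subtype.val_injective hf.mem_nonZeroDivisors
  obtain ⟨k, hk⟩ := isSquare_of_isUnit K hfA
  exact ⟨k, k.2, congrArg Subtype.val hk⟩

namespace LinearMap

variable {R M : Type*} [CommRing R] [AddCommGroup M] [Module R M] {B : LinearMap.BilinForm R M}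

theorem IsAdjointPair.swap (hB : (∀ x y, B x y = B y x) ∨ (∀ x y, B x y = -B y x))
    {f g : M → M} (h : IsAdjointPair B B f g) : IsAdjointPair B B g f := by
  intro x y
  rcases hB with hB | hB
  · rw [hB, ← h, hB]
  · rw [hB, ← h, hB, neg_neg]

theorem IsSelfAdjoint.of_mem_adjoin_singleton {f k : Module.End R M} (hf : B.IsSelfAdjoint f)
    (hk : k ∈ Algebra.adjoin R {f}) : B.IsSelfAdjoint k := by
  induction hk using Algebra.adjoin_induction with
  | mem x hx => rwa [Set.mem_singleton_iff.mp hx]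
  | algebraMap r =>
    rw [Algebra.algebraMap_eq_smul_one]
    exact isAdjointPair_one.smul r
  | add x y _ _ hx hy => exact hx.add hy
  | mul x y hxA hyA hx hy =>
    have := hx.mul hy
    rwa [setLike_mul_comm hyA hxA] at this

end LinearMap

namespace LinearMap.BilinForm

variable {K V : Type*} [Field K] [AddCommGroup V] [Module K V] [FiniteDimensional K V]
  {B : LinearMap.BilinForm K V}

theorem isUnit_leftAdjointOfNondegenerate (hB : B.Nondegenerate) {φ : Module.End K V}
    (hφ : IsUnit φ) : IsUnit (B.leftAdjointOfNondegenerate hB φ) := by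
  rw [isUnit_iff_ker_eq_bot, ker_eq_bot']
  intro x hx
  refine hB.1 x fun y => ?_
  obtain ⟨z, rfl⟩ := (Module.End.isUnit_iff φ).mp hφ |>.surjective y
  rw [← isAdjointPairLeftAdjointOfNondegenerate B hB φ, hx, map_zero, LinearMap.zero_apply]

theorem isSelfAdjoint_leftAdjointOfNondegenerate_mul_self (hB : B.Nondegenerate)
    (hBsa : (∀ x y, B x y = B y x) ∨ (∀ x y, B x y = -B y x)) (φ : Module.End K V) :
    B.IsSelfAdjoint (B.leftAdjointOfNondegenerate hB φ * φ) :=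
  (isAdjointPairLeftAdjointOfNondegenerate B hB φ).mul
    ((isAdjointPairLeftAdjointOfNondegenerate B hB φ).swap hBsa)

theorem leftAdjointOfNondegenerate_mul_eq (hB : B.Nondegenerate) {φ C C' : Module.End K V}
    (hC : B.IsSkewAdjoint C) (hC' : B.IsSkewAdjoint C') (h : φ * C = C' * φ) :
    B.leftAdjointOfNondegenerate hB φ * C' = C * B.leftAdjointOfNondegenerate hB φ := by
  have hφ := isAdjointPairLeftAdjointOfNondegenerate B hB φ
  replace hC : IsAdjointPair B B C (-C : Module.End K V) := hC
  replace hC' : IsAdjointPair B B C' (-C' : Module.End K V) := hC'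
  refine B.isAdjointPair_unique_of_nondegenerate hB (-(φ * C)) _ _ ?_ ?_
  · rw [h]
    simpa using hφ.mul hC'
  · simpa using hC.mul hφ

theorem commute_leftAdjointOfNondegenerate_mul_self (hB : B.Nondegenerate)
    {φ C C' : Module.End K V} (hC : B.IsSkewAdjoint C) (hC' : B.IsSkewAdjoint C')
    (h : φ * C = C' * φ) : Commute (B.leftAdjointOfNondegenerate hB φ * φ) C := by
  rw [Commute, SemiconjBy, mul_assoc, h, ← mul_assoc,
    leftAdjointOfNondegenerate_mul_eq hB hC hC' h, mul_assoc]

theorem exists_isOrthogonal_conj_eq [IsAlgClosed K] [NeZero (2 : K)] (hB : B.Nondegenerate)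
    (hBsa : (∀ x y, B x y = B y x) ∨ (∀ x y, B x y = -B y x)) {C C' : Module.End K V}
    (hC : B.IsSkewAdjoint C) (hC' : B.IsSkewAdjoint C') {g : V ≃ₗ[K] V} (hg : g.conj C = C') :
    ∃ P : V ≃ₗ[K] V, B.IsOrthogonal P ∧ P.conj C = C' := by
  have hg_unit : IsUnit (g : Module.End K V) := (Module.End.isUnit_iff _).mpr g.bijective
  have hgC : (g : Module.End K V) * C = C' * g := by
    rw [← hg]; ext; simp
  have hA_unit : IsUnit (B.leftAdjointOfNondegenerate hB g * g) :=
    (isUnit_leftAdjointOfNondegenerate hB hg_unit).mul hg_unit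
  obtain ⟨k, hk, hA⟩ := Module.End.exists_mem_adjoin_eq_mul_self hA_unit
  have hk_sa : B.IsSelfAdjoint k :=
    (isSelfAdjoint_leftAdjointOfNondegenerate_mul_self hB hBsa g).of_mem_adjoin_singleton hk
  have hk_comm : Commute C k := Algebra.commute_of_mem_adjoin_singleton_of_commute hk
    (commute_leftAdjointOfNondegenerate_mul_self hB hC hC' hgC).symm
  let κ := GeneralLinearGroup.toLinearEquiv (isUnit_of_mul_isUnit_left (hA ▸ hA_unit)).unit
  have hgκ : ∀ x y, B (g x) (g y) = B (κ x) (κ y) := fun x y =>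
    calc B (g x) (g y) = B ((B.leftAdjointOfNondegenerate hB g * g) x) y :=
          (isAdjointPairLeftAdjointOfNondegenerate B hB g _ _).symm
      _ = B (k (k x)) y := by rw [hA]; rfl
      _ = B (κ x) (κ y) := hk_sa _ _
  have hκC : κ.symm.conj C = C := by
    ext x
    rw [LinearEquiv.conj_apply_apply, LinearEquiv.symm_symm, LinearEquiv.symm_apply_eq]
    exact LinearMap.congr_fun hk_comm x
  refine ⟨κ.symm.trans g, fun x y => by simpa using hgκ (κ.symm x) (κ.symm y), ?_⟩
  change g.conj (κ.symm.conj C) = C'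
  rw [hκC, hg]

end LinearMap.BilinForm

theorem stmt3_general {V : Type*} [AddCommGroup V] [Module ℂ V] [FiniteDimensional ℂ V]
    (B : LinearMap.BilinForm ℂ V) (hB : B.Nondegenerate)
    (hBsa : (∀ x y : V, B x y = B y x) ∨ (∀ x y : V, B x y = - B y x))
    (C C' : V →ₗ[ℂ] V)
    (hC : ∀ x y : V, B (C x) y = - B x (C y))
    (hC' : ∀ x y : V, B (C' x) y = - B x (C' y)) :
    (∃ P : V ≃ₗ[ℂ] V, (∀ x y : V, B (P x) (P y) = B x y) ∧
        ∀ x : V, C' x = P (C (P.symm x))) ↔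
    (∃ P : V ≃ₗ[ℂ] V, ∀ x : V, C' x = P (C (P.symm x))) := by
  refine ⟨fun ⟨P, _, hP⟩ => ⟨P, hP⟩, fun ⟨g, hg⟩ => ?_⟩
  obtain ⟨P, hP, hPC⟩ := B.exists_isOrthogonal_conj_eq hB hBsa (C := C) (C' := C')
    (fun x y => by simp [hC]) (fun x y => by simp [hC']) (LinearMap.ext fun x => (hg x).symm)
  exact ⟨P, hP, fun x => by rw [← hPC]; rfl⟩

/-- For a nondegenerate symmetric or alternating form `B` on a
finite-dimensional complex space and nilpotent skew-symmetric `C, C'`,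
conjugacy by an isometry is equivalent to similarity. -/
theorem stmt3 {V : Type*} [AddCommGroup V] [Module ℂ V] [FiniteDimensional ℂ V]
    (B : LinearMap.BilinForm ℂ V) (hB : B.Nondegenerate)
    (hBsa : (∀ x y : V, B x y = B y x) ∨ (∀ x y : V, B x y = - B y x))
    (C C' : V →ₗ[ℂ] V)
    (hCnil : IsNilpotent C) (hC'nil : IsNilpotent C')
    (hC : ∀ x y : V, B (C x) y = - B x (C y))
    (hC' : ∀ x y : V, B (C' x) y = - B x (C' y)) :
    (∃ P : V ≃ₗ[ℂ] V, (∀ x y : V, B (P x) (P y) = B x y) ∧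
        ∀ x : V, C' x = P (C (P.symm x))) ↔
    (∃ P : V ≃ₗ[ℂ] V, ∀ x : V, C' x = P (C (P.symm x))) :=
  stmt3_general B hB hBsa C C' hC hC'
end

section
/- Let (V, B) be a quadratic vector space over ℂ and let C be a nilpotent endomorphism of V that is skew-symmetric with respect to B. Then for every even integer k ≥ 2, the number dim ker(C^{k-1}) + dim ker(C^{k+1}) is even; equivalently, every even part of the Jordan partition of C occurs with even multiplicity, so the Jordan partition of C belongs to the set P₁(dim V) of partitions in which even parts occur with even multiplicity. -/
/-!
For odd `m`, the power `C ^ m` is again skew-adjoint, so `(x, y) ↦ B (C ^ m x) y` is a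
skew-symmetric form whose radical is `ker (C ^ m)`. On a complement of the radical it is
nondegenerate, and a nondegenerate skew-symmetric form lives in even dimension
(`det M = det Mᵀ = (-1) ^ n det M`). Hence `C ^ (k - 1)` and `C ^ (k + 1)` both have even rank
when `k` is even, and rank–nullity gives the parity of the sum of the kernel dimensions.
-/

open Module LinearMap
open scoped Matrix

section CommRing

variable {R M : Type*} [CommRing R] [AddCommGroup M] [Module R M]

namespace LinearMap

theorem IsAdjointPair.pow_s4 {B : LinearMap.BilinForm R M} {f g : Module.End R M}
    (h : IsAdjointPair B B f g) (n : ℕ) : IsAdjointPair B B ⇑(f ^ n) ⇑(g ^ n) := by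
  induction n with
  | zero => exact isAdjointPair_one
  | succ n ih => rw [pow_succ f, pow_succ' g]; exact ih.mul h

theorem IsSkewAdjoint.pow_of_odd {B : LinearMap.BilinForm R M} {D : Module.End R M}
    (hD : IsSkewAdjoint B D) {m : ℕ} (hm : Odd m) : IsSkewAdjoint B ⇑(D ^ m) := by
  have h := IsAdjointPair.pow_s4 (f := D) (g := -D) hD m
  rwa [hm.neg_pow] at h

end LinearMap

theorem LinearMap.BilinForm.transpose_toMatrix_of_skew {ι : Type*} [Fintype ι] [DecidableEq ι]
    (b : Basis ι R M) {F : LinearMap.BilinForm R M} (hF : ∀ x y, F y x = -F x y) :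
    (toMatrix b F)ᵀ = -toMatrix b F := by
  ext i j
  rw [Matrix.transpose_apply, toMatrix_apply, hF, Matrix.neg_apply, toMatrix_apply]

end CommRing

namespace LinearMap.BilinForm

variable {K V : Type*} [Field K] [AddCommGroup V] [Module K V] [FiniteDimensional K V]

theorem even_finrank_of_nondegenerate_of_skew (hK : ringChar K ≠ 2)
    {F : LinearMap.BilinForm K V} (hF : F.Nondegenerate) (hskew : ∀ x y, F y x = -F x y) :
    Even (finrank K V) := by
  set M := toMatrix (finBasis K V) F
  have hdet : M.det ≠ 0 := (nondegenerate_iff_det_ne_zero _).mp hF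
  have hsign : (-1 : K) ^ finrank K V * M.det = 1 * M.det :=
    calc (-1 : K) ^ finrank K V * M.det = (-M).det := by rw [Matrix.det_neg, Fintype.card_fin]
      _ = Mᵀ.det := by rw [transpose_toMatrix_of_skew _ hskew]
      _ = 1 * M.det := by rw [Matrix.det_transpose, one_mul]
  rw [← neg_one_pow_eq_one_iff_even (Ring.neg_one_ne_one_of_char_ne_two hK)]
  exact mul_right_cancel₀ hdet hsign

theorem nondegenerate_restrict_of_isCompl_ker {F : LinearMap.BilinForm K V} (hF : F.IsRefl)
    {U : Submodule K V} (hU : IsCompl U (ker F)) : (F.restrict U).Nondegenerate := by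
  rw [nondegenerate_iff_ker_eq_bot,
    ker_restrict_eq_of_codisjoint hU.codisjoint fun x _ y hy ↦ hF y x (by simp [mem_ker.mp hy]),
    ← Submodule.disjoint_iff_comap_eq_bot]
  exact hU.disjoint

theorem even_finrank_range_of_skew (hK : ringChar K ≠ 2) {F : LinearMap.BilinForm K V}
    (hskew : ∀ x y, F y x = -F x y) : Even (finrank K (range F)) := by
  obtain ⟨U, hU⟩ := (ker F).exists_isCompl
  have hrefl : F.IsRefl := fun x y h ↦ by rw [hskew, h, neg_zero]
  have hU_even : Even (finrank K U) :=
    even_finrank_of_nondegenerate_of_skew hK (nondegenerate_restrict_of_isCompl_ker hrefl hU.symm)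
      fun x y ↦ hskew x y
  have hU_dim := Submodule.finrank_add_eq_of_isCompl hU
  have hF_dim := finrank_range_add_finrank_ker F
  rwa [show finrank K (range F) = finrank K U by omega]

theorem even_finrank_range_of_isSkewAdjoint (hK : ringChar K ≠ 2) {B : LinearMap.BilinForm K V}
    (hB : B.Nondegenerate) (hB_symm : B.IsSymm) {D : Module.End K V}
    (hD : IsSkewAdjoint B D) : Even (finrank K (range D)) := by
  have hF_skew : ∀ x y, (B ∘ₗ D) y x = -(B ∘ₗ D) x y := fun x y ↦ by
    show B (D y) x = -B (D x) y
    rw [hD y x, Pi.neg_apply, map_neg, hB_symm.eq]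
  have hker : ker (B ∘ₗ D) = ker D := ker_comp_of_ker_eq_bot D hB.ker_eq_bot
  have hF_dim := finrank_range_add_finrank_ker (B ∘ₗ D)
  have hD_dim := finrank_range_add_finrank_ker D
  have hF_even := even_finrank_range_of_skew hK hF_skew
  rw [hker] at hF_dim
  rwa [show finrank K (range D) = finrank K (range (B ∘ₗ D)) by omega]

end LinearMap.BilinForm

theorem stmt4_general {V : Type*} [AddCommGroup V] [Module ℂ V] [FiniteDimensional ℂ V]
    (B : LinearMap.BilinForm ℂ V) (hB : B.Nondegenerate)
    (hBsymm : ∀ x y : V, B x y = B y x)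
    (C : V →ₗ[ℂ] V)
    (hC : ∀ x y : V, B (C x) y = - B x (C y)) :
    ∀ k : ℕ, 2 ≤ k → Even k →
      Even (Module.finrank ℂ (LinearMap.ker (C ^ (k - 1))) +
        Module.finrank ℂ (LinearMap.ker (C ^ (k + 1)))) := by
  intro k hk hk_even
  have hℂ : ringChar ℂ ≠ 2 := by simp
  have hC_skew : IsSkewAdjoint B C := fun x y ↦ (hC x y).trans (map_neg (B x) (C y)).symm
  have even_rank {m : ℕ} (hm : Odd m) : Even (finrank ℂ (range (C ^ m))) :=
    BilinForm.even_finrank_range_of_isSkewAdjoint hℂ hB ⟨hBsymm⟩ (IsSkewAdjoint.pow_of_odd hC_skew hm)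
  obtain ⟨r, hr⟩ := even_rank (Nat.Even.sub_odd (by omega) hk_even odd_one)
  obtain ⟨s, hs⟩ := even_rank hk_even.add_one
  have h₁ := finrank_range_add_finrank_ker (C ^ (k - 1))
  have h₂ := finrank_range_add_finrank_ker (C ^ (k + 1))
  exact ⟨finrank ℂ V - r - s, by omega⟩

/-- For a nilpotent skew-symmetric endomorphism of a quadratic vector
space over `ℂ`, for every even `k ≥ 2` the number
`dim ker (C^(k-1)) + dim ker (C^(k+1))` is even, i.e. even parts of the Jordan
partition of `C` occur with even multiplicity. -/
theorem stmt4 {V : Type*} [AddCommGroup V] [Module ℂ V] [FiniteDimensional ℂ V]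
    (B : LinearMap.BilinForm ℂ V) (hB : B.Nondegenerate)
    (hBsymm : ∀ x y : V, B x y = B y x)
    (C : V →ₗ[ℂ] V) (hCnil : IsNilpotent C)
    (hC : ∀ x y : V, B (C x) y = - B x (C y)) :
    ∀ k : ℕ, 2 ≤ k → Even k →
      Even (Module.finrank ℂ (LinearMap.ker (C ^ (k - 1))) +
        Module.finrank ℂ (LinearMap.ker (C ^ (k + 1)))) :=
  stmt4_general B hB hBsymm C hC
end

section
/- Let n ≥ 1 and let d₁ ≥ d₂ ≥ … ≥ d_r ≥ 1 be a partition of 2n in which every odd part occurs with even multiplicity. Then on every symplectic vector space (V, B) of dimension 2n over ℂ there exists a nilpotent endomorphism C of V, skew-symmetric with respect to B, whose Jordan type is the given partition, i.e. dim ker(C^k) = Σᵢ min(dᵢ, k) for every k ≥ 0. (This is the surjectivity part of the Gerstenhaber correspondence of Proposition 1.2.10 for sp(2n), realized by the explicit maps C^J_{2p} and C^J_{p+p}.) -/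
/-!
Take one Jordan chain of length `d i` for every part, with `shift` moving each chain down by
one position, so that `ker (shift ^ k)` consists of the first `min (d i) k` positions of every
chain. Pair the chains by an involution `τ` preserving lengths and fixing no chain of odd length
(this is what even multiplicity of the odd parts allows), and pair position `t` of chain `i`
with position `d i - 1 - t` of chain `τ i`, with sign `σ i * (-1) ^ t`. The shift is skew for
this form; the form is skew-symmetric once `σ (τ i) = (-1) ^ d i * σ i`, which a chain fixed by
`τ` can only satisfy if its length is even; and it is nondegenerate. By Darboux's theorem it is
isometric to `(V, B)`, and the shift transported along the isometry is the required
endomorphism.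
-/

open Module Finset Matrix

theorem exists_involutive_perm_ne_self_of_even_card {T : Type*} [Fintype T]
    (h : Even (Fintype.card T)) :
    ∃ ρ : Equiv.Perm T, Function.Involutive ρ ∧ ∀ x, ρ x ≠ x := by
  obtain ⟨m, hm⟩ := h
  let e : T ≃ Fin m ⊕ Fin m := (Fintype.equivFinOfCardEq hm).trans finSumFinEquiv.symm
  refine ⟨e.symm.permCongr (Equiv.sumComm _ _), fun x => by simp, fun x hx => ?_⟩
  rw [Equiv.permCongr_apply, Equiv.symm_apply_eq] at hx
  cases h : e x <;> simp [h] at hx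

theorem exists_involutive_fiberwise_of_even_card {α β : Type*} [Fintype α]
    [DecidableEq β] (f : α → β) (P : β → Prop)
    (h : ∀ b, P b → Even (Fintype.card {a // f a = b})) :
    ∃ τ : α → α, Function.Involutive τ ∧ (∀ a, f (τ a) = f a) ∧ ∀ a, P (f a) → τ a ≠ a := by
  classical
  have hρ : ∀ b, ∃ ρ : Equiv.Perm {a // f a = b},
      Function.Involutive ρ ∧ (P b → ∀ x, ρ x ≠ x) := fun b =>
    if hb : P b then
      (exists_involutive_perm_ne_self_of_even_card (h b hb)).imp
        fun _ hρ => ⟨hρ.1, fun _ => hρ.2⟩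
    else ⟨1, fun _ => rfl, fun h' => (hb h').elim⟩
  choose ρ hρinv hρne using hρ
  refine ⟨fun a => (ρ (f a) ⟨a, rfl⟩).1, ?_, fun a => (ρ (f a) ⟨a, rfl⟩).2, ?_⟩
  · have key : ∀ b (y : {a // f a = b}), (ρ (f y.1) ⟨y.1, rfl⟩).1 = (ρ b y).1 := by
      rintro b ⟨y, rfl⟩; rfl
    intro a
    exact (key (f a) (ρ (f a) ⟨a, rfl⟩)).trans (congrArg Subtype.val (hρinv _ _))
  · intro a ha hfix
    exact hρne (f a) ha ⟨a, rfl⟩ (Subtype.ext hfix)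

theorem exists_sign_of_involutive {ι K : Type*} [LinearOrder ι] [Field K] {d : ι → ℕ}
    {τ : ι → ι} (hτ : Function.Involutive τ) (hτd : ∀ i, d (τ i) = d i)
    (hodd : ∀ i, Odd (d i) → τ i ≠ i) :
    ∃ σ : ι → K, (∀ i, σ i ≠ 0) ∧ ∀ i, σ (τ i) = (-1) ^ d i * σ i := by
  refine ⟨fun i => if i ≤ τ i then 1 else (-1) ^ d i, fun i => ?_, fun i => ?_⟩
  · dsimp only
    split_ifs <;> simp
  · rcases lt_trichotomy i (τ i) with hlt | heq | hgt
    · simp [hτ i, hlt.le, hlt.not_ge, hτd]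
    · have hev : Even (d i) := Nat.not_odd_iff_even.mp fun h => hodd i h heq.symm
      rw [← heq, hev.neg_one_pow, one_mul]
    · simp [hτ i, hgt.le, hgt.not_ge, ← pow_add, Even.neg_one_pow ⟨d i, rfl⟩]

namespace LinearMap.BilinForm

variable {K V : Type*} [Field K] [AddCommGroup V] [Module K V] {B : LinearMap.BilinForm K V}

theorem linearIndependent_of_apply_eq_J {l : Type*} [Fintype l] [DecidableEq l]
    {v : l ⊕ l → V} (hv : ∀ p q, B (v p) (v q) = J l K p q) : LinearIndependent K v := by
  rw [Fintype.linearIndependent_iff]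
  intro c hc
  have hJc : J l K *ᵥ c = 0 := by
    ext q
    simpa [mulVec, dotProduct, ← hv, map_sum, mul_comm] using congrArg (B (v q)) hc
  have hc := congrArg (J l K *ᵥ ·) hJc
  simp only [mulVec_mulVec, J_squared, neg_mulVec, one_mulVec, mulVec_zero, neg_eq_zero] at hc
  exact congrFun hc

variable [FiniteDimensional K V]

theorem exists_apply_eq_one_nondegenerate_restrict_orthogonal [Nontrivial V]
    (hB : B.Nondegenerate) (hA : B.IsAlt) :
    ∃ x y : V, B x y = 1 ∧
      (B.restrict (B.orthogonal (Submodule.span K {x, y}))).Nondegenerate ∧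
      finrank K (B.orthogonal (Submodule.span K {x, y})) + 2 = finrank K V := by
  obtain ⟨x, hx⟩ := exists_ne (0 : V)
  obtain ⟨y₀, hy₀⟩ : ∃ y₀, B x y₀ ≠ 0 := by
    by_contra! h
    exact hx (hB.1 x h)
  set y := (B x y₀)⁻¹ • y₀
  have hxy : B x y = 1 := by simp [y, hy₀]
  have hyx : B y x = -1 := by rw [← LinearMap.IsAlt.neg hA, hxy]
  have hcoeff : ∀ s t : K, B x (s • x + t • y) = t ∧ B y (s • x + t • y) = -s :=
    fun s t => by simp [hA.self_eq_zero, hxy, hyx]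
  set P := Submodule.span K {x, y}
  have hdisj : Disjoint P (B.orthogonal P) := by
    rw [Submodule.disjoint_def]
    rintro z hzP hzP'
    obtain ⟨s, t, rfl⟩ := Submodule.mem_span_pair.mp hzP
    have ht := (hcoeff s t).1 ▸ hzP' x (Submodule.subset_span (by simp))
    have hs := (hcoeff s t).2 ▸ hzP' y (Submodule.subset_span (by simp))
    simp_all
  have hP : (B.restrict P).Nondegenerate :=
    B.nondegenerate_restrict_of_disjoint_orthogonal hA.isRefl hdisj
  have hcompl := B.isCompl_orthogonal_of_restrict_nondegenerate hA.isRefl hP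
  have hrankP : finrank K P = 2 := by
    have hli : LinearIndependent K ![x, y] := LinearIndependent.pair_iff.mpr fun s t hst =>
      (by simpa [hst, eq_comm] using hcoeff s t : t = 0 ∧ s = 0).symm
    have := finrank_span_eq_card hli
    rwa [Matrix.range_cons, Matrix.range_cons, Matrix.range_empty, Set.union_empty,
      Set.singleton_union, Fintype.card_fin] at this
  refine ⟨x, y, hxy, ?_, ?_⟩
  · rw [restrict_nondegenerate_iff_isCompl_orthogonal hA.isRefl,
      orthogonal_orthogonal hB hA.isRefl]
    exact hcompl.symm
  · rw [← Submodule.finrank_add_eq_of_isCompl hcompl, hrankP, add_comm]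

theorem exists_apply_eq_J (hB : B.Nondegenerate) (hA : B.IsAlt) {n : ℕ}
    (hn : finrank K V = 2 * n) :
    ∃ v : Fin n ⊕ Fin n → V, ∀ p q, B (v p) (v q) = J (Fin n) K p q := by
  induction n generalizing V with
  | zero =>
    exact ⟨fun p => p.elim Fin.elim0 Fin.elim0, fun p => p.elim Fin.elim0 Fin.elim0⟩
  | succ n ih =>
    have : Nontrivial V := Module.nontrivial_of_finrank_pos (R := K) (by omega)
    obtain ⟨x, y, hxy, hW, hWrank⟩ :=
      exists_apply_eq_one_nondegenerate_restrict_orthogonal hB hA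
    set W := B.orthogonal (Submodule.span K {x, y})
    obtain ⟨w, hw⟩ := ih hW (fun z => hA z) (by omega)
    have hw' : ∀ p q, B (w p) (w q) = J (Fin n) K p q := hw
    have hxW : ∀ z ∈ W, B x z = 0 ∧ B y z = 0 ∧ B z x = 0 ∧ B z y = 0 := fun z hz => by
      have hx : B x z = 0 := hz x (Submodule.subset_span (by simp))
      have hy : B y z = 0 := hz y (Submodule.subset_span (by simp))
      exact ⟨hx, hy, hA.isRefl _ _ hx, hA.isRefl _ _ hy⟩
    have hyx : B y x = -1 := by rw [← LinearMap.IsAlt.neg hA, hxy]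
    refine ⟨Sum.elim (Fin.cons y fun i => w (.inl i)) (Fin.cons x fun i => w (.inr i)), ?_⟩
    rintro (p | p) (q | q) <;> cases p using Fin.cases <;> cases q using Fin.cases <;>
      simp [J, hA.self_eq_zero, hxy, hyx, hxW, hw', Matrix.one_apply, Fin.succ_ne_zero,
        (Fin.succ_ne_zero _).symm]

theorem exists_basis_apply_eq_J (hB : B.Nondegenerate) (hA : B.IsAlt) {n : ℕ}
    (hn : finrank K V = 2 * n) :
    ∃ b : Basis (Fin n ⊕ Fin n) K V, ∀ p q, B (b p) (b q) = J (Fin n) K p q := by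
  obtain ⟨v, hv⟩ := exists_apply_eq_J hB hA hn
  have hli := linearIndependent_of_apply_eq_J hv
  have hspan := hli.span_eq_top_of_card_eq_finrank' (by simp [hn, two_mul])
  exact ⟨Basis.mk hli hspan.ge, by simpa using hv⟩

theorem exists_linearEquiv_apply_eq {W : Type*} [AddCommGroup W] [Module K W]
    [FiniteDimensional K W] {B' : LinearMap.BilinForm K W} (hB : B.Nondegenerate) (hA : B.IsAlt)
    (hB' : B'.Nondegenerate) (hA' : B'.IsAlt) {n : ℕ} (hV : finrank K V = 2 * n)
    (hW : finrank K W = 2 * n) : ∃ φ : V ≃ₗ[K] W, ∀ x y, B' (φ x) (φ y) = B x y := by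
  obtain ⟨bv, hbv⟩ := exists_basis_apply_eq_J hB hA hV
  obtain ⟨bw, hbw⟩ := exists_basis_apply_eq_J hB' hA' hW
  refine ⟨bv.equiv bw (Equiv.refl _), fun x y => ?_⟩
  suffices B'.compl₁₂ (bv.equiv bw (Equiv.refl _)).toLinearMap
      (bv.equiv bw (Equiv.refl _)).toLinearMap = B from LinearMap.congr_fun₂ this x y
  refine LinearMap.ext_basis bv bv fun p q => ?_
  simp [hbv, hbw]

end LinearMap.BilinForm

theorem exists_nilpotent_skew_of_isometry {K V W : Type*} [Field K] [AddCommGroup V]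
    [Module K V] [AddCommGroup W] [Module K W] {B : LinearMap.BilinForm K V}
    {B' : LinearMap.BilinForm K W} (φ : V ≃ₗ[K] W) (hφ : ∀ x y, B' (φ x) (φ y) = B x y)
    {C' : Module.End K W} (hnil : IsNilpotent C') (hskew : ∀ x y, B' (C' x) y = -B' x (C' y)) :
    ∃ C : Module.End K V, IsNilpotent C ∧ (∀ x y, B (C x) y = -B x (C y)) ∧
      ∀ k, finrank K (LinearMap.ker (C ^ k)) = finrank K (LinearMap.ker (C' ^ k)) := by
  refine ⟨φ.symm.conjRingEquiv C', hnil.map _, fun x y => ?_, fun k => ?_⟩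
  · simp [← hφ, hskew]
  · have hker : LinearMap.ker (φ.symm.conjRingEquiv C' ^ k) =
        (LinearMap.ker (C' ^ k)).comap φ.toLinearMap := by
      ext x
      rw [← map_pow, LinearMap.mem_ker, LinearEquiv.conjRingEquiv_apply_apply]
      simp
    rw [hker, Submodule.comap_equiv_eq_map_symm, LinearEquiv.finrank_map_eq]

theorem sum_range_neg_one_pow_mul_shift {R : Type*} [CommRing R] (n : ℕ) (f g : ℕ → R)
    (hf : f n = 0) (hg : g n = 0) :
    ∑ t ∈ range n, (-1) ^ t * f (t + 1) * g (n - 1 - t) =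
      -∑ t ∈ range n, (-1) ^ t * f t * g (n - 1 - t + 1) := by
  cases n with
  | zero => simp
  | succ m =>
    rw [sum_range_succ, sum_range_succ', hf, show m + 1 - 1 - 0 + 1 = m + 1 by omega, hg]
    simp only [mul_zero, zero_mul, add_zero]
    rw [← sum_neg_distrib]
    refine sum_congr rfl fun t ht => ?_
    rw [show m + 1 - 1 - (t + 1) + 1 = m - t by have := mem_range.mp ht; omega, pow_succ]
    simp only [Nat.add_sub_cancel]
    ring

namespace JordanChain

variable {K ι : Type*} [Field K]

abbrev Cell (d : ι → ℕ) := Σ i : ι, Fin (d i)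

def coeff (d : ι → ℕ) (i : ι) (t : ℕ) : (Cell d → K) →ₗ[K] K :=
  if h : t < d i then LinearMap.proj (⟨i, ⟨t, h⟩⟩ : Cell d) else 0

def shift (d : ι → ℕ) : Module.End K (Cell d → K) :=
  LinearMap.pi fun a => coeff d a.1 (a.2 + 1)

def partner {d : ι → ℕ} {τ : ι → ι} (hτd : ∀ i, d (τ i) = d i) (a : Cell d) : Cell d :=
  ⟨τ a.1, ⟨d a.1 - 1 - a.2, by have := a.2.2; rw [hτd]; omega⟩⟩

def form [Fintype ι] (d : ι → ℕ) (τ : ι → ι) (σ : ι → K) :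
    LinearMap.BilinForm K (Cell d → K) :=
  ∑ a : Cell d, (σ a.1 * (-1) ^ (a.2 : ℕ)) •
    (LinearMap.mul K K).compl₁₂ (LinearMap.proj a) (coeff d (τ a.1) (d a.1 - 1 - a.2))

variable {d : ι → ℕ}

theorem coeff_apply_of_lt {i : ι} {t : ℕ} (h : t < d i) (x : Cell d → K) :
    coeff d i t x = x ⟨i, ⟨t, h⟩⟩ := by
  simp [coeff, h]

theorem coeff_apply_of_le {i : ι} {t : ℕ} (h : d i ≤ t) (x : Cell d → K) :
    coeff d i t x = 0 := by
  simp [coeff, h.not_gt]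

theorem coeff_apply_cell (a : Cell d) (x : Cell d → K) : coeff d a.1 a.2 x = x a :=
  coeff_apply_of_lt a.2.2 x

theorem coeff_shift (i : ι) (t : ℕ) (x : Cell d → K) :
    coeff d i t (shift d x) = coeff d i (t + 1) x := by
  by_cases h : t < d i
  · rw [coeff_apply_of_lt h]; rfl
  · rw [coeff_apply_of_le (not_lt.mp h), coeff_apply_of_le (by omega)]

theorem coeff_shift_pow (k : ℕ) (i : ι) (t : ℕ) (x : Cell d → K) :
    coeff d i t ((shift d ^ k) x) = coeff d i (t + k) x := by
  induction k generalizing x with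
  | zero => rfl
  | succ k ih => rw [pow_succ, Module.End.mul_apply, ih, coeff_shift, add_assoc]

theorem shift_pow_apply (k : ℕ) (x : Cell d → K) (a : Cell d) :
    (shift d ^ k) x a = coeff d a.1 (a.2 + k) x := by
  rw [← coeff_apply_cell a ((shift d ^ k) x), coeff_shift_pow]

theorem ker_shift_pow (k : ℕ) :
    LinearMap.ker (shift d ^ k : Module.End K (Cell d → K)) =
      ⨅ a ∈ {a : Cell d | k ≤ a.2}, LinearMap.ker (LinearMap.proj a) := by
  ext x
  simp only [LinearMap.mem_ker, Submodule.mem_iInf, Set.mem_ofPred_eq, LinearMap.proj_apply]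
  constructor
  · intro h a ha
    have := congrFun h ⟨a.1, ⟨a.2 - k, by omega⟩⟩
    rw [shift_pow_apply] at this
    dsimp only at this
    rwa [Nat.sub_add_cancel ha, coeff_apply_cell] at this
  · intro h
    funext a
    rw [shift_pow_apply]
    by_cases ha : a.2 + k < d a.1
    · rw [coeff_apply_of_lt ha]
      exact h _ (Nat.le_add_left _ _)
    · exact coeff_apply_of_le (not_lt.mp ha) x

theorem partner_involutive {τ : ι → ι} (hτ : Function.Involutive τ)
    (hτd : ∀ i, d (τ i) = d i) :
    Function.Involutive (partner hτd) := fun a =>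
  Sigma.ext (hτ a.1) <| (Fin.heq_ext_iff (congrArg d (hτ a.1))).mpr <| by
    have := a.2.2
    simp only [partner, hτd]
    omega

theorem sign_partner {τ : ι → ι} {σ : ι → K} (hτd : ∀ i, d (τ i) = d i)
    (hσ : ∀ i, σ (τ i) = (-1) ^ d i * σ i) (a : Cell d) :
    σ (partner hτd a).1 * (-1) ^ ((partner hτd a).2 : ℕ) = -(σ a.1 * (-1) ^ (a.2 : ℕ)) := by
  obtain ⟨s, hs⟩ := Nat.exists_eq_add_of_lt a.2.2
  have hsq : ((-1 : K) ^ s) ^ 2 = 1 := by rw [← pow_mul, mul_comm, pow_mul, neg_one_sq, one_pow]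
  simp only [partner, hσ, hs, show (a.2 : ℕ) + s + 1 - 1 - a.2 = s by omega, pow_add]
  linear_combination (-(σ a.1 * (-1) ^ (a.2 : ℕ))) * hsq

variable [Fintype ι]

variable (d) in
theorem isNilpotent_shift : IsNilpotent (shift d : Module.End K (Cell d → K)) := by
  refine ⟨∑ i, d i, LinearMap.ext fun x => funext fun a => ?_⟩
  have := single_le_sum (fun i _ => Nat.zero_le (d i)) (mem_univ a.1)
  rw [shift_pow_apply, coeff_apply_of_le (by omega)]
  rfl

variable (d) in
theorem finrank_ker_shift_pow (k : ℕ) :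
    finrank K (LinearMap.ker (shift d ^ k : Module.End K (Cell d → K))) =
      ∑ i, min (d i) k := by
  classical
  have hdisj : Disjoint {a : Cell d | (a.2 : ℕ) < k} {a | k ≤ a.2} :=
    Set.disjoint_left.mpr fun a (h : (a.2 : ℕ) < k) (h' : k ≤ a.2) => by omega
  have hcover : Set.univ ⊆ {a : Cell d | (a.2 : ℕ) < k} ∪ {a | k ≤ a.2} :=
    fun a _ => by simp [lt_or_ge]
  have e := LinearMap.iInfKerProjEquiv K (fun _ : Cell d => K) hdisj hcover
  rw [ker_shift_pow, e.finrank_eq, finrank_fintype_fun_eq_card]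
  simp_rw [Set.coe_ofPred, Fintype.card_subtype, card_filter, Fintype.sum_sigma, ← card_filter,
    Fin.card_filter_val_lt]

variable {τ : ι → ι} {σ : ι → K}

theorem form_apply (x y : Cell d → K) :
    form d τ σ x y = ∑ a : Cell d, σ a.1 * (-1) ^ (a.2 : ℕ) * x a *
      coeff d (τ a.1) (d a.1 - 1 - a.2) y := by
  simp [form, LinearMap.sum_apply, mul_assoc]

theorem form_apply_eq_sum_range (x y : Cell d → K) :
    form d τ σ x y = ∑ i, σ i * ∑ t ∈ range (d i),
      (-1) ^ t * coeff d i t x * coeff d (τ i) (d i - 1 - t) y := by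
  rw [form_apply, Fintype.sum_sigma]
  refine sum_congr rfl fun i _ => ?_
  rw [mul_sum, ← Fin.sum_univ_eq_sum_range]
  refine sum_congr rfl fun t _ => ?_
  rw [coeff_apply_of_lt t.2]
  ring

theorem form_apply_eq_sum_partner (hτd : ∀ i, d (τ i) = d i) (x y : Cell d → K) :
    form d τ σ x y = ∑ a : Cell d, σ a.1 * (-1) ^ (a.2 : ℕ) * x a * y (partner hτd a) := by
  rw [form_apply]
  exact sum_congr rfl fun a _ => congrArg _ (coeff_apply_of_lt (partner hτd a).2.2 y)

theorem form_apply_eq_neg_swap (hτ : Function.Involutive τ) (hτd : ∀ i, d (τ i) = d i)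
    (hσ : ∀ i, σ (τ i) = (-1) ^ d i * σ i) (x y : Cell d → K) :
    form d τ σ x y = -form d τ σ y x := by
  rw [form_apply_eq_sum_partner hτd, form_apply_eq_sum_partner hτd, ← sum_neg_distrib]
  refine Fintype.sum_bijective _ (partner_involutive hτ hτd).bijective _ _ fun a => ?_
  rw [sign_partner hτd hσ, partner_involutive hτ hτd]
  ring

theorem form_nondegenerate (hτ : Function.Involutive τ) (hτd : ∀ i, d (τ i) = d i)
    (hσ0 : ∀ i, σ i ≠ 0) : (form d τ σ).Nondegenerate := by
  classical
  refine .ofSeparatingLeft fun x hx => funext fun a => ?_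
  have h := hx (Pi.single (partner hτd a) 1)
  simp only [form_apply_eq_sum_partner hτd, Pi.single_apply,
    (partner_involutive hτ hτd).injective.eq_iff, mul_ite, mul_one, mul_zero,
    sum_ite_eq', mem_univ, if_true] at h
  exact (mul_eq_zero.mp h).resolve_left (mul_ne_zero (hσ0 a.1) (by simp))

theorem form_shift_left (hτd : ∀ i, d (τ i) = d i) (x y : Cell d → K) :
    form d τ σ (shift d x) y = -form d τ σ x (shift d y) := by
  rw [form_apply_eq_sum_range, form_apply_eq_sum_range, ← sum_neg_distrib]
  refine sum_congr rfl fun i _ => ?_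
  simp only [coeff_shift, ← mul_neg]
  exact congrArg _ <| sum_range_neg_one_pow_mul_shift (d i) (coeff d i · x)
    (coeff d (τ i) · y) (coeff_apply_of_le le_rfl x) (coeff_apply_of_le (hτd i).le y)

end JordanChain

theorem stmt6_general (n r : ℕ) (d : Fin r → ℕ)
    (hsum : ∑ i : Fin r, d i = 2 * n)
    (hodd : ∀ m : ℕ, Odd m →
      Even (Finset.univ.filter (fun i : Fin r => d i = m)).card)
    {V : Type*} [AddCommGroup V] [Module ℂ V] [FiniteDimensional ℂ V]
    (B : LinearMap.BilinForm ℂ V) (hB : B.Nondegenerate)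
    (hBalt : ∀ x y : V, B x y = - B y x)
    (hdim : Module.finrank ℂ V = 2 * n) :
    ∃ C : V →ₗ[ℂ] V, IsNilpotent C ∧
      (∀ x y : V, B (C x) y = - B x (C y)) ∧
      (∀ k : ℕ, Module.finrank ℂ (LinearMap.ker (C ^ k)) = ∑ i : Fin r, min (d i) k) := by
  obtain ⟨τ, hτ, hτd, hτodd⟩ := exists_involutive_fiberwise_of_even_card d Odd
    fun m hm => by simpa [Fintype.card_subtype] using hodd m hm
  obtain ⟨σ, hσ0, hσ⟩ := exists_sign_of_involutive (K := ℂ) hτ hτd hτodd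
  have hmodel := JordanChain.form_apply_eq_neg_swap hτ hτd hσ
  obtain ⟨φ, hφ⟩ := LinearMap.BilinForm.exists_linearEquiv_apply_eq hB
    (LinearMap.isAlt_iff_eq_neg_flip.mpr (LinearMap.ext₂ hBalt))
    (JordanChain.form_nondegenerate hτ hτd hσ0)
    (LinearMap.isAlt_iff_eq_neg_flip.mpr (LinearMap.ext₂ hmodel))
    hdim (by simpa [Fintype.card_sigma] using hsum)
  obtain ⟨C, hCnil, hCskew, hCker⟩ := exists_nilpotent_skew_of_isometry φ hφ
    (JordanChain.isNilpotent_shift d) (JordanChain.form_shift_left hτd)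
  exact ⟨C, hCnil, hCskew, fun k => (hCker k).trans (JordanChain.finrank_ker_shift_pow d k)⟩

/-- Every partition of `2n` in which odd parts occur with even
multiplicity is the Jordan type of a nilpotent skew-symmetric endomorphism of any
symplectic vector space of dimension `2n` over `ℂ`. -/
theorem stmt6 (n r : ℕ) (hn : 1 ≤ n) (hr : 1 ≤ r) (d : Fin r → ℕ)
    (hanti : Antitone d) (hpos : ∀ i : Fin r, 1 ≤ d i)
    (hsum : ∑ i : Fin r, d i = 2 * n)
    (hodd : ∀ m : ℕ, Odd m →
      Even (Finset.univ.filter (fun i : Fin r => d i = m)).card)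
    {V : Type*} [AddCommGroup V] [Module ℂ V] [FiniteDimensional ℂ V]
    (B : LinearMap.BilinForm ℂ V) (hB : B.Nondegenerate)
    (hBalt : ∀ x y : V, B x y = - B y x)
    (hdim : Module.finrank ℂ V = 2 * n) :
    ∃ C : V →ₗ[ℂ] V, IsNilpotent C ∧
      (∀ x y : V, B (C x) y = - B x (C y)) ∧
      (∀ k : ℕ, Module.finrank ℂ (LinearMap.ker (C ^ k)) = ∑ i : Fin r, min (d i) k) :=
  stmt6_general n r d hsum hodd B hB hBalt hdim
end

section
/- Let m ≥ 1 and let d₁ ≥ d₂ ≥ … ≥ d_r ≥ 1 be a partition of m in which every even part occurs with even multiplicity. Then on every quadratic vector space (V, B) of dimension m over ℂ there exists a nilpotent endomorphism C of V, skew-symmetric with respect to B, whose Jordan type is the given partition, i.e. dim ker(C^k) = Σᵢ min(dᵢ, k) for every k ≥ 0. (This is the surjectivity part of the Gerstenhaber correspondence of Proposition 1.2.10 for o(m), realized by the explicit maps C^J_{2p} and C^J_{2p+1}.) -/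
/-!
Realize the partition on the model space with coordinates `x (i, a)`, `a < d i`, where the
nilpotent map `shift` moves each block down by one step, so that its Jordan blocks have sizes
`d i`. Choose an involution `σ` of the parts with `d ∘ σ = d` fixing exactly the odd parts
(possible because even parts come in pairs), and pair the coordinate `(i, a)` with
`(σ i, d i - 1 - a)` with coefficient `ε i * (-1) ^ a`. The alternating signs make `shift` skew,
and block signs with `ε (σ i) = (-1) ^ (d i + 1) * ε i` make the form symmetric and
nondegenerate. Any two nondegenerate symmetric bilinear forms of the same dimension over `ℂ` are
isometric, so the model transports to `(V, B)`.
-/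

open Function Finset Module

theorem exists_involutive_ne_of_even_card {α : Type*} [Fintype α] (h : Even (Fintype.card α)) :
    ∃ τ : α → α, Involutive τ ∧ ∀ a, τ a ≠ a := by
  obtain ⟨n, hn⟩ := h
  have e : α ≃ Fin n × Bool := Fintype.equivOfCardEq (by simp [hn, mul_two])
  refine ⟨fun a => e.symm ((e a).1, !(e a).2), fun a => by simp, fun a ha => ?_⟩
  simpa using congrArg (fun a => (e a).2) ha

theorem exists_involutive_fixing_odd {ι : Type*} [Fintype ι] (d : ι → ℕ)
    (h : ∀ p, Even p → Even #{i | d i = p}) :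
    ∃ σ : ι → ι, Involutive σ ∧ (∀ i, d (σ i) = d i) ∧
      ∀ i, σ i = i ↔ ¬Even (d i) := by
  have hfiber (p : ℕ) : ∃ τ : {i // d i = p} → {i // d i = p},
      Involutive τ ∧ ∀ a, τ a = a ↔ ¬Even p := by
    by_cases hp : Even p
    · obtain ⟨τ, hτ, hne⟩ := exists_involutive_ne_of_even_card (α := {i // d i = p})
        (by simpa [Fintype.card_subtype] using h p hp)
      exact ⟨τ, hτ, fun a => by simp [hne a, hp]⟩
    · exact ⟨id, fun _ => rfl, fun _ => by simp [hp]⟩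
  choose τ hτ hfix using hfiber
  let σ (i : ι) : ι := τ (d i) ⟨i, rfl⟩
  have hστ (p : ℕ) (a : {i // d i = p}) : σ a = τ p a := by
    obtain ⟨i, rfl⟩ := a
    rfl
  refine ⟨σ, fun i => ?_, fun i => (τ (d i) ⟨i, rfl⟩).2, fun i => ?_⟩
  · rw [hστ (d i) (τ (d i) ⟨i, rfl⟩), hτ]
  · rw [← hfix (d i) ⟨i, rfl⟩, Subtype.ext_iff]

theorem exists_sign_of_involutive_s7 {ι R : Type*} [LinearOrder ι] [CommRing R] {d : ι → ℕ}
    {σ : ι → ι} (hσ : Involutive σ) (hfix : ∀ i, σ i = i ↔ ¬Even (d i)) :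
    ∃ ε : ι → R, (∀ i, IsUnit (ε i)) ∧ ∀ i, ε (σ i) = (-1) ^ (d i + 1) * ε i := by
  refine ⟨fun i => if σ i < i then -1 else 1, fun i => ?_, fun i => ?_⟩
  · dsimp only
    split_ifs <;> simp
  dsimp only
  by_cases h : σ i = i
  · have : Even (d i + 1) := (Nat.not_even_iff_odd.1 ((hfix i).1 h)).add_one
    simp [h, this.neg_one_pow]
  · have : Odd (d i + 1) := (not_not.1 ((hfix i).not.1 h)).add_one
    rw [this.neg_one_pow, hσ i]
    rcases lt_or_gt_of_ne h with h' | h' <;> simp [h', h'.not_gt]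

theorem Fin.sum_neg_one_pow_mul_shift_mul_rev {R : Type*} [CommRing R] {n : ℕ}
    (u v : Fin n → R) :
    ∑ a : Fin n, (-1) ^ (a : ℕ) * (if h : a.val + 1 < n then u ⟨a + 1, h⟩ else 0) *
        v a.rev =
      -∑ a : Fin n, (-1) ^ (a : ℕ) * u a *
        (if h : a.rev.val + 1 < n then v ⟨a.rev + 1, h⟩ else 0) := by
  cases n with
  | zero => simp
  | succ n =>
    have hu (a : Fin n) : (if h : (a : ℕ) + 1 < n + 1 then u ⟨a + 1, h⟩ else 0) = u a.succ :=
      dif_pos (by omega)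
    have hv (a : Fin n) :
        (if h : a.succ.rev.val + 1 < n + 1 then v ⟨a.succ.rev + 1, h⟩ else 0) =
          v a.castSucc.rev := by
      have := a.isLt
      rw [dif_pos (by simp only [Fin.val_rev, Fin.val_succ]; omega)]
      congr 1
      ext
      simp only [Fin.val_rev, Fin.val_succ, Fin.val_castSucc]
      omega
    rw [Fin.sum_univ_castSucc, Fin.sum_univ_succ]
    simp only [hu, hv, Fin.val_last, Fin.rev_zero, lt_irrefl, dite_false, Fin.val_succ,
      Fin.val_castSucc, Fin.val_zero, pow_succ, mul_zero, zero_mul, add_zero, zero_add, mul_neg_one,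
      neg_mul, sum_neg_distrib, neg_neg]

namespace JordanModel

variable {ι R : Type*} (d : ι → ℕ)

section Shift

variable [Semiring R]

def shift : ((Σ i, Fin (d i)) → R) →ₗ[R] (Σ i, Fin (d i)) → R where
  toFun x q := if h : q.2.val + 1 < d q.1 then x ⟨q.1, ⟨q.2 + 1, h⟩⟩ else 0
  map_add' x y := by ext q; by_cases h : q.2.val + 1 < d q.1 <;> simp [h]
  map_smul' c x := by ext q; by_cases h : q.2.val + 1 < d q.1 <;> simp [h]

theorem shift_apply (x : (Σ i, Fin (d i)) → R) (q : Σ i, Fin (d i)) :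
    shift d x q = if h : q.2.val + 1 < d q.1 then x ⟨q.1, ⟨q.2 + 1, h⟩⟩ else 0 :=
  rfl

theorem shift_pow_apply (k : ℕ) (x : (Σ i, Fin (d i)) → R) (q : Σ i, Fin (d i)) :
    (shift d ^ k) x q = if h : q.2.val + k < d q.1 then x ⟨q.1, ⟨q.2 + k, h⟩⟩ else 0 := by
  induction k generalizing x with
  | zero => simp
  | succ k ih =>
    rw [pow_succ, Module.End.mul_apply, ih]
    by_cases h : q.2.val + (k + 1) < d q.1
    · rw [dif_pos (by omega), dif_pos h, shift_apply, dif_pos (by simpa [add_assoc] using h)]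
      simp [add_assoc]
    · rw [dif_neg h]
      split_ifs with h'
      · rw [shift_apply, dif_neg (by simpa [add_assoc] using h)]
      · rfl

theorem isNilpotent_shift [Fintype ι] : IsNilpotent (shift (R := R) d) := by
  refine ⟨univ.sup d, LinearMap.ext fun x => funext fun q => ?_⟩
  have := le_sup (f := d) (mem_univ q.1)
  rw [shift_pow_apply, dif_neg (by omega)]
  rfl

theorem mem_ker_shift_pow {k : ℕ} {x : (Σ i, Fin (d i)) → R} :
    x ∈ LinearMap.ker (shift d ^ k) ↔ ∀ q : Σ i, Fin (d i), k ≤ q.2.val → x q = 0 := by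
  simp only [LinearMap.mem_ker, funext_iff, Pi.zero_apply, shift_pow_apply]
  refine ⟨fun h q hq => ?_, fun h q => ?_⟩
  · obtain ⟨i, a⟩ := q
    dsimp only at hq
    have := h ⟨i, ⟨a - k, by omega⟩⟩
    rw [dif_pos (by dsimp only; omega)] at this
    simpa [Nat.sub_add_cancel hq] using this
  · split_ifs
    · exact h _ (Nat.le_add_left k _)
    · rfl

end Shift

theorem finrank_ker_shift_pow [Fintype ι] {K : Type*} [Field K] (k : ℕ) :
    Module.finrank K (LinearMap.ker (shift (R := K) d ^ k)) = ∑ i, min (d i) k := by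
  classical
  let I : Set (Σ i, Fin (d i)) := {q | q.2.val < k}
  have hker : LinearMap.ker (shift (R := K) d ^ k) =
      ⨅ q ∈ Iᶜ, LinearMap.ker (LinearMap.proj q : ((Σ i, Fin (d i)) → K) →ₗ[K] K) := by
    ext x
    rw [mem_ker_shift_pow]
    simp [I]
  rw [hker, (LinearMap.iInfKerProjEquiv K (fun _ => K) disjoint_compl_right
    (by simp)).finrank_eq, Module.finrank_fintype_fun_eq_card]
  change Fintype.card {q : Σ i, Fin (d i) // q.2.val < k} = _
  rw [Fintype.card_subtype, ← univ_sigma_univ, filter_sigma, card_sigma]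
  simp only [Fin.card_filter_val_lt]

variable {d} {σ : ι → ι} (hd : ∀ i, d (σ i) = d i)

def reflect (q : Σ i, Fin (d i)) : Σ i, Fin (d i) :=
  ⟨σ q.1, Fin.cast (hd q.1).symm q.2.rev⟩

theorem involutive_reflect (hσ : Involutive σ) : Involutive (reflect hd) := by
  rintro ⟨i, a⟩
  refine Sigma.ext (hσ i) ((Fin.heq_ext_iff (congrArg d (hσ i))).2 ?_)
  simp only [reflect, Fin.val_cast, Fin.val_rev]
  have := hd i
  omega

variable [CommRing R]

theorem coeff_reflect {ε : ι → R} (hε : ∀ i, ε (σ i) = (-1) ^ (d i + 1) * ε i)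
    (q : Σ i, Fin (d i)) :
    ε (reflect hd q).1 * (-1) ^ ((reflect hd q).2 : ℕ) = ε q.1 * (-1) ^ (q.2 : ℕ) := by
  obtain ⟨i, a⟩ := q
  have hexp : d i + 1 + (d i - (a + 1)) = a + 2 * (d i - a) := by omega
  simp only [reflect, Fin.val_cast, Fin.val_rev, hε]
  rw [mul_right_comm, mul_comm, ← pow_add, hexp, pow_add, pow_mul, neg_one_sq, one_pow, mul_one]

theorem shift_apply_reflect (y : (Σ i, Fin (d i)) → R) (i : ι) (a : Fin (d i)) :
    shift d y (reflect hd ⟨i, a⟩) = if h : a.rev.val + 1 < d i then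
      y ⟨σ i, Fin.cast (hd i).symm ⟨a.rev + 1, h⟩⟩ else 0 := by
  rw [shift_apply]
  by_cases h : a.rev.val + 1 < d i
  · rw [dif_pos (by simpa [reflect, hd] using h), dif_pos h]
    rfl
  · rw [dif_neg (by simpa [reflect, hd] using h), dif_neg h]

variable [Fintype ι]

def form (ε : ι → R) : LinearMap.BilinForm R ((Σ i, Fin (d i)) → R) :=
  LinearMap.mk₂ R (fun x y => ∑ q, ε q.1 * (-1) ^ (q.2 : ℕ) * x q * y (reflect hd q))
    (fun x x' y => by simp only [Pi.add_apply, ← sum_add_distrib]; congr! 1; ring)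
    (fun c x y => by simp only [Pi.smul_apply, smul_eq_mul, mul_sum]; congr! 1; ring)
    (fun x y y' => by simp only [Pi.add_apply, ← sum_add_distrib]; congr! 1; ring)
    (fun c x y => by simp only [Pi.smul_apply, smul_eq_mul, mul_sum]; congr! 1; ring)

theorem form_apply (ε : ι → R) (x y : (Σ i, Fin (d i)) → R) :
    form hd ε x y = ∑ q, ε q.1 * (-1) ^ (q.2 : ℕ) * x q * y (reflect hd q) :=
  rfl

theorem form_apply_single_reflect [DecidableEq ι] (hσ : Involutive σ) (ε : ι → R)
    (x : (Σ i, Fin (d i)) → R) (p : Σ i, Fin (d i)) :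
    form hd ε x (Pi.single (reflect hd p) 1) = ε p.1 * (-1) ^ (p.2 : ℕ) * x p := by
  rw [form_apply, sum_eq_single p]
  · simp
  · intro q _ hq
    rw [Pi.single_eq_of_ne, mul_zero]
    exact fun h => hq ((involutive_reflect hd hσ).injective h)
  · simp

theorem form_comm (hσ : Involutive σ) {ε : ι → R}
    (hε : ∀ i, ε (σ i) = (-1) ^ (d i + 1) * ε i) (x y : (Σ i, Fin (d i)) → R) :
    form hd ε x y = form hd ε y x := by
  rw [form_apply, form_apply]
  refine Fintype.sum_equiv (Involutive.toPerm _ (involutive_reflect hd hσ)) _ _ fun q => ?_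
  rw [Involutive.coe_toPerm, coeff_reflect hd hε, involutive_reflect hd hσ]
  ring

theorem form_shift (ε : ι → R) (x y : (Σ i, Fin (d i)) → R) :
    form hd ε (shift d x) y = -form hd ε x (shift d y) := by
  simp only [form_apply, Fintype.sum_sigma]
  rw [← sum_neg_distrib]
  refine sum_congr rfl fun i _ => ?_
  simp only [shift_apply_reflect]
  calc _ = ε i * ∑ a : Fin (d i), (-1) ^ (a : ℕ) *
        (if h : a.val + 1 < d i then x ⟨i, ⟨a + 1, h⟩⟩ else 0) *
          y (reflect hd ⟨i, a⟩) := by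
        rw [mul_sum]; exact sum_congr rfl fun a _ => by rw [shift_apply]; ring
    _ = ε i * -∑ a : Fin (d i), (-1) ^ (a : ℕ) * x ⟨i, a⟩ *
          (if h : a.rev.val + 1 < d i then
            y ⟨σ i, Fin.cast (hd i).symm ⟨a.rev + 1, h⟩⟩ else 0) :=
        congrArg _ (Fin.sum_neg_one_pow_mul_shift_mul_rev (fun a => x ⟨i, a⟩)
          (fun b => y ⟨σ i, Fin.cast (hd i).symm b⟩))
    _ = _ := by
        rw [mul_neg, mul_sum]
        exact congrArg _ (sum_congr rfl fun a _ => by ring)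

theorem form_nondegenerate (hσ : Involutive σ) {ε : ι → R} (hunit : ∀ i, IsUnit (ε i))
    (hε : ∀ i, ε (σ i) = (-1) ^ (d i + 1) * ε i) : (form hd ε).Nondegenerate := by
  classical
  have hrefl : (form hd ε).IsRefl := fun x y h => by rwa [form_comm hd hσ hε]
  refine hrefl.nondegenerate_iff_separatingLeft.2 ?_
  intro x hx
  funext p
  have := hx (Pi.single (reflect hd p) 1)
  rw [form_apply_single_reflect hd hσ] at this
  exact ((hunit p.1).mul (isUnit_one.neg.pow _)).mul_right_eq_zero.mp this

end JordanModel

theorem LinearMap.BilinForm.exists_isometry_of_finrank_eq {K V W : Type*} [Field K] [IsAlgClosed K]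
    [Invertible (2 : K)] [AddCommGroup V] [Module K V] [FiniteDimensional K V]
    [AddCommGroup W] [Module K W] [FiniteDimensional K W]
    {B₁ : LinearMap.BilinForm K V} {B₂ : LinearMap.BilinForm K W}
    (hB₁ : B₁.Nondegenerate) (hB₂ : B₂.Nondegenerate)
    (hs₁ : ∀ x y, B₁ x y = B₁ y x) (hs₂ : ∀ x y, B₂ x y = B₂ y x)
    (h : finrank K V = finrank K W) :
    ∃ φ : V ≃ₗ[K] W, ∀ x y, B₂ (φ x) (φ y) = B₁ x y := by
  have hB₁' := QuadraticMap.associated_left_inverse K hs₁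
  have hB₂' := QuadraticMap.associated_left_inverse K hs₂
  obtain ⟨e₁⟩ := QuadraticForm.equivalent_weightedSumSquares_of_isAlgClosed
    B₁.toQuadraticMap (by rw [hB₁']; exact hB₁.1)
  obtain ⟨e₂⟩ := QuadraticForm.equivalent_weightedSumSquares_of_isAlgClosed
    B₂.toQuadraticMap (by rw [hB₂']; exact hB₂.1)
  rw [h] at e₁
  let f := e₁.trans e₂.symm
  refine ⟨f.toLinearEquiv, fun x y => ?_⟩
  have hf : B₂.toQuadraticMap.comp f.toLinearEquiv.toLinearMap = B₁.toQuadraticMap :=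
    QuadraticMap.ext f.map_app
  have := congrArg (QuadraticMap.associated (R := K)) hf
  rw [QuadraticMap.associated_comp, hB₁', hB₂'] at this
  exact LinearMap.congr_fun₂ this x y

theorem LinearEquiv.finrank_ker_conjRingEquiv {K M N : Type*} [Field K] [AddCommGroup M]
    [Module K M] [AddCommGroup N] [Module K N] (e : M ≃ₗ[K] N) (f : Module.End K M) :
    finrank K (LinearMap.ker (e.conjRingEquiv f)) = finrank K (LinearMap.ker f) := by
  have : LinearMap.ker (e.conjRingEquiv f) = (LinearMap.ker f).map (e : M →ₗ[K] N) := by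
    ext x
    simp [Submodule.mem_map_equiv]
  rw [this, LinearEquiv.finrank_map_eq]

open JordanModel

theorem stmt7_general (m r : ℕ) (d : Fin r → ℕ)
    (hsum : ∑ i : Fin r, d i = m)
    (heven : ∀ p : ℕ, Even p →
      Even (Finset.univ.filter (fun i : Fin r => d i = p)).card)
    {V : Type*} [AddCommGroup V] [Module ℂ V] [FiniteDimensional ℂ V]
    (B : LinearMap.BilinForm ℂ V) (hB : B.Nondegenerate)
    (hBsymm : ∀ x y : V, B x y = B y x)
    (hdim : Module.finrank ℂ V = m) :
    ∃ C : V →ₗ[ℂ] V, IsNilpotent C ∧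
      (∀ x y : V, B (C x) y = - B x (C y)) ∧
      (∀ k : ℕ, Module.finrank ℂ (LinearMap.ker (C ^ k)) = ∑ i : Fin r, min (d i) k) := by
  obtain ⟨σ, hσ, hd, hfix⟩ := exists_involutive_fixing_odd d heven
  obtain ⟨ε, hunit, hε⟩ := exists_sign_of_involutive_s7 (R := ℂ) hσ hfix
  obtain ⟨φ, hφ⟩ := LinearMap.BilinForm.exists_isometry_of_finrank_eq hB
    (form_nondegenerate hd hσ hunit hε) hBsymm (form_comm hd hσ hε) (by simp [hdim, hsum])
  refine ⟨φ.symm.conjRingEquiv (shift d), (isNilpotent_shift d).map _, fun x y => ?_,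
    fun k => ?_⟩
  · rw [← hφ, ← hφ]
    simpa using form_shift hd ε (φ x) (φ y)
  · rw [← map_pow, LinearEquiv.finrank_ker_conjRingEquiv, finrank_ker_shift_pow]

/-- Every partition of `m` in which even parts occur with even
multiplicity is the Jordan type of a nilpotent skew-symmetric endomorphism of any
quadratic vector space of dimension `m` over `ℂ`. -/
theorem stmt7 (m r : ℕ) (hm : 1 ≤ m) (hr : 1 ≤ r) (d : Fin r → ℕ)
    (hanti : Antitone d) (hpos : ∀ i : Fin r, 1 ≤ d i)
    (hsum : ∑ i : Fin r, d i = m)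
    (heven : ∀ p : ℕ, Even p →
      Even (Finset.univ.filter (fun i : Fin r => d i = p)).card)
    {V : Type*} [AddCommGroup V] [Module ℂ V] [FiniteDimensional ℂ V]
    (B : LinearMap.BilinForm ℂ V) (hB : B.Nondegenerate)
    (hBsymm : ∀ x y : V, B x y = B y x)
    (hdim : Module.finrank ℂ V = m) :
    ∃ C : V →ₗ[ℂ] V, IsNilpotent C ∧
      (∀ x y : V, B (C x) y = - B x (C y)) ∧
      (∀ k : ℕ, Module.finrank ℂ (LinearMap.ker (C ^ k)) = ∑ i : Fin r, min (d i) k) :=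
  stmt7_general m r d hsum heven B hB hBsymm hdim
end

section
/- Let V be a finite-dimensional complex vector space with a nondegenerate bilinear form B that is either symmetric or alternating, and suppose V = V₊ ⊕ V₋ where V₊ and V₋ are totally isotropic subspaces. Let N and N' be endomorphisms of V, both skew-symmetric with respect to B, both mapping V₊ into V₊ and V₋ into V₋. Suppose there exists an invertible linear map U₊ : V₊ → V₊ such that N'(x) = (U₊ ∘ N ∘ U₊⁻¹)(x) for all x ∈ V₊. Then there exists an isometry U of (V, B) with U(V₊) = V₊ and U(V₋) = V₋ such that N' = U ∘ N ∘ U⁻¹. -/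
/-!
Since `V₊` and `V₋` are complementary and totally isotropic, `B` restricts to a perfect pairing
`V₊ × V₋ → ℂ`. Hence `U₊` extends to the isometry `U = U₊ ⊕ U₋` of `V`, where `U₋` is the
inverse transpose of `U₊` for this pairing (the cross terms `B(V₋, V₊)` are handled by the
`±`-symmetry of `B`). The difference `N' - U N U⁻¹` is skew, vanishes on `V₊` and maps `V₋` into
`V₋`; for `x ∈ V₋`, skewness makes its value orthogonal to `V₊` and isotropy makes it orthogonal
to `V₋`, so it vanishes on `V₋` too.
-/

namespace LinearMap

variable {R M N : Type*} [CommRing R] [AddCommGroup M] [Module R M] [AddCommGroup N] [Module R N]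

noncomputable def contragredient (p : M →ₗ[R] N →ₗ[R] R) [p.IsPerfPair] (e : M ≃ₗ[R] M) :
    N ≃ₗ[R] N :=
  p.flip.toPerfPair.trans (e.symm.dualMap.trans p.flip.toPerfPair.symm)

@[simp]
lemma apply_contragredient (p : M →ₗ[R] N →ₗ[R] R) [p.IsPerfPair] (e : M ≃ₗ[R] M) (x : M)
    (y : N) : p (e x) (p.contragredient e y) = p x y := by
  simp [contragredient]

lemma SeparatingLeft.eq_zero_of_sup_eq_top {B : M →ₗ[R] N →ₗ[R] R} (hB : B.SeparatingLeft)
    {P Q : Submodule R N} (hPQ : P ⊔ Q = ⊤) {x : M} (hxP : ∀ y ∈ P, B x y = 0)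
    (hxQ : ∀ y ∈ Q, B x y = 0) : x = 0 :=
  hB x fun _ => (sup_le hxP hxQ : P ⊔ Q ≤ ker (B x)) (hPQ ▸ Submodule.mem_top)

end LinearMap

namespace Submodule

variable {R E : Type*} [Ring R] [AddCommGroup E] [Module R E]

lemma map_linearEquiv_eq_self {p : Submodule R E} (U : E ≃ₗ[R] E) (e : p ≃ₗ[R] p)
    (hU : ∀ x : p, U x = e x) : p.map (U : E →ₗ[R] E) = p := by
  ext x
  refine ⟨?_, fun hx => ⟨e.symm ⟨x, hx⟩, coe_mem _, by simp [hU]⟩⟩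
  rintro ⟨y, hy, rfl⟩
  simp [hU ⟨y, hy⟩]

end Submodule

namespace LinearEquiv

variable {R E : Type*} [Ring R] [AddCommGroup E] [Module R E] {p q : Submodule R E}
  (h : IsCompl p q) (e : p ≃ₗ[R] p) (f : q ≃ₗ[R] q)

noncomputable def ofIsCompl : E ≃ₗ[R] E :=
  (p.prodEquivOfIsCompl q h).symm ≪≫ₗ e.prodCongr f ≪≫ₗ p.prodEquivOfIsCompl q h

lemma ofIsCompl_apply_left (x : p) : ofIsCompl h e f x = e x := by
  simp [ofIsCompl]

lemma ofIsCompl_apply_right (x : q) : ofIsCompl h e f x = f x := by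
  simp [ofIsCompl]

lemma map_ofIsCompl_left : p.map (ofIsCompl h e f : E →ₗ[R] E) = p :=
  p.map_linearEquiv_eq_self _ e (ofIsCompl_apply_left h e f)

lemma map_ofIsCompl_right : q.map (ofIsCompl h e f : E →ₗ[R] E) = q :=
  q.map_linearEquiv_eq_self _ f (ofIsCompl_apply_right h e f)

lemma ofIsCompl_mem_right {x : E} (hx : x ∈ q) : ofIsCompl h e f x ∈ q := by
  simp [ofIsCompl_apply_right h e f ⟨x, hx⟩]

end LinearEquiv

namespace LinearMap.BilinForm

section CommRing

variable {R V : Type*} [CommRing R] [AddCommGroup V] [Module R V] {B : LinearMap.BilinForm R V}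
  {P Q : Submodule R V}

lemma apply_ofIsCompl_apply_ofIsCompl {ε : R} (hε : ∀ x y, B x y = ε * B y x)
    (hPQ : IsCompl P Q) (hP : ∀ x ∈ P, ∀ y ∈ P, B x y = 0) (hQ : ∀ x ∈ Q, ∀ y ∈ Q, B x y = 0)
    {e : P ≃ₗ[R] P} {f : Q ≃ₗ[R] Q} (hef : ∀ (a : P) (b : Q), B (e a) (f b) = B a b)
    (x y : V) : B (LinearEquiv.ofIsCompl hPQ e f x) (LinearEquiv.ofIsCompl hPQ e f y) = B x y := by
  have hfe (a : P) (b : Q) : B (f b) (e a) = B b a := by rw [hε, hef, ← hε]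
  obtain ⟨a, b, rfl, -⟩ := Submodule.existsUnique_add_of_isCompl hPQ x
  obtain ⟨c, d, rfl, -⟩ := Submodule.existsUnique_add_of_isCompl hPQ y
  simp only [map_add, LinearEquiv.ofIsCompl_apply_left, LinearEquiv.ofIsCompl_apply_right,
    LinearMap.add_apply, hef, hfe, hP _ (e _).2 _ (e _).2, hQ _ (f _).2 _ (f _).2, hP _ a.2 _ c.2,
    hQ _ b.2 _ d.2]

lemma skew_conj {U : V ≃ₗ[R] V} (hU : ∀ x y, B (U x) (U y) = B x y) {N : Module.End R V}
    (hN : ∀ x y, B (N x) y = -B x (N y)) (x y : V) :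
    B (U.conj N x) y = -B x (U.conj N y) := by
  have hU' (x y : V) : B (U x) y = B x (U.symm y) := by
    rw [← hU x, LinearEquiv.apply_symm_apply]
  rw [LinearEquiv.conj_apply_apply, LinearEquiv.conj_apply_apply, hU', hN, ← hU (U.symm x),
    LinearEquiv.apply_symm_apply]

lemma eq_zero_of_skew (hB : B.SeparatingRight) (hPQ : P ⊔ Q = ⊤)
    (hQ : ∀ x ∈ Q, ∀ y ∈ Q, B x y = 0) {D : Module.End R V}
    (hD : ∀ x y, B (D x) y = -B x (D y)) (hDP : ∀ x ∈ P, D x = 0) (hDQ : ∀ x ∈ Q, D x ∈ Q) :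
    D = 0 := by
  have hDQ' : Q ≤ LinearMap.ker D := fun x hx =>
    (flip_separatingLeft.2 hB).eq_zero_of_sup_eq_top hPQ
      (fun y hy => by simp [← neg_eq_zero, ← hD, hDP y hy]) (fun y hy => hQ y hy _ (hDQ x hx))
  exact LinearMap.ker_eq_top.1 (top_le_iff.1 (hPQ ▸ sup_le hDP hDQ'))

end CommRing

variable {K V : Type*} [Field K] [AddCommGroup V] [Module K V] {B : LinearMap.BilinForm K V}
  {P Q : Submodule K V}

lemma isPerfPair_domRestrict₁₂ [FiniteDimensional K V] (hB : B.Nondegenerate)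
    (hPQ : IsCompl P Q) (hP : ∀ x ∈ P, ∀ y ∈ P, B x y = 0) (hQ : ∀ x ∈ Q, ∀ y ∈ Q, B x y = 0) :
    (B.domRestrict₁₂ P Q).IsPerfPair := by
  refine .of_injective (injective_iff_map_eq_zero _ |>.2 fun a ha => ?_)
    (injective_iff_map_eq_zero _ |>.2 fun b hb => ?_)
  · refine Subtype.ext <| hB.1.eq_zero_of_sup_eq_top hPQ.sup_eq_top (hP a a.2) fun y hy => ?_
    exact LinearMap.congr_fun ha ⟨y, hy⟩
  · refine Subtype.ext <| (flip_separatingLeft.2 hB.2).eq_zero_of_sup_eq_top hPQ.sup_eq_top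
      (fun y hy => ?_) fun y hy => hQ y hy b b.2
    exact LinearMap.congr_fun hb ⟨y, hy⟩

end LinearMap.BilinForm

open LinearMap.BilinForm LinearEquiv

theorem stmt12_general {V : Type*} [AddCommGroup V] [Module ℂ V] [FiniteDimensional ℂ V]
    (B : LinearMap.BilinForm ℂ V) (hB : B.Nondegenerate)
    (hBsa : (∀ x y : V, B x y = B y x) ∨ (∀ x y : V, B x y = - B y x))
    (Vp Vm : Submodule ℂ V) (hcompl : IsCompl Vp Vm)
    (hVp : ∀ x ∈ Vp, ∀ y ∈ Vp, B x y = 0)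
    (hVm : ∀ x ∈ Vm, ∀ y ∈ Vm, B x y = 0)
    (N N' : V →ₗ[ℂ] V)
    (hN : ∀ x y : V, B (N x) y = - B x (N y))
    (hN' : ∀ x y : V, B (N' x) y = - B x (N' y))
    (hNVp : ∀ x ∈ Vp, N x ∈ Vp) (hNVm : ∀ x ∈ Vm, N x ∈ Vm)
    (hN'Vm : ∀ x ∈ Vm, N' x ∈ Vm)
    (Up : ↥Vp ≃ₗ[ℂ] ↥Vp)
    (hUp : ∀ (x : ↥Vp) (h : N ↑(Up.symm x) ∈ Vp),
      N' ↑x = ↑(Up ⟨N ↑(Up.symm x), h⟩)) :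
    ∃ U : V ≃ₗ[ℂ] V, (∀ x y : V, B (U x) (U y) = B x y) ∧
      Submodule.map U.toLinearMap Vp = Vp ∧
      Submodule.map U.toLinearMap Vm = Vm ∧
      ∀ x : V, N' x = U (N (U.symm x)) := by
  have := isPerfPair_domRestrict₁₂ hB hcompl hVp hVm
  obtain ⟨ε, hε⟩ : ∃ ε : ℂ, ∀ x y, B x y = ε * B y x := by
    rcases hBsa with h | h
    exacts [⟨1, by simpa using h⟩, ⟨-1, by simpa using h⟩]
  set Um := (B.domRestrict₁₂ Vp Vm).contragredient Up
  set U := ofIsCompl hcompl Up Um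
  have hU : ∀ x y, B (U x) (U y) = B x y :=
    apply_ofIsCompl_apply_ofIsCompl hε hcompl hVp hVm ((B.domRestrict₁₂ Vp Vm).apply_contragredient Up)
  have hUVm (x : V) (hx : x ∈ Vm) : U.conj N x ∈ Vm :=
    ofIsCompl_mem_right hcompl Up Um <| hNVm _ <| ofIsCompl_mem_right hcompl Up.symm Um.symm hx
  have hUVp (x : V) (hx : x ∈ Vp) : N' x = U.conj N x := by
    have hNx := hNVp _ (Up.symm ⟨x, hx⟩).2
    have hUx : U.symm x = Up.symm ⟨x, hx⟩ := ofIsCompl_apply_left hcompl Up.symm Um.symm ⟨x, hx⟩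
    rw [conj_apply_apply, hUx, hUp ⟨x, hx⟩ hNx]
    exact (ofIsCompl_apply_left hcompl Up Um ⟨_, hNx⟩).symm
  refine ⟨U, hU, map_ofIsCompl_left .., map_ofIsCompl_right .., fun x => ?_⟩
  have := eq_zero_of_skew hB.2 hcompl.sup_eq_top hVm (D := N' - U.conj N)
    (fun x y => by simp only [LinearMap.sub_apply, map_sub, hN', skew_conj hU hN]; ring)
    (fun x hx => sub_eq_zero.2 (hUVp x hx))
    (fun x hx => Vm.sub_mem (hN'Vm x hx) (hUVm x hx))
  exact LinearMap.congr_fun (sub_eq_zero.1 this) x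

/-- For `V = V₊ ⊕ V₋` with both summands totally isotropic and `N, N'`
skew-symmetric maps preserving both summands, if `N'|_{V₊} = U₊ N U₊⁻¹` for some
invertible `U₊ : V₊ → V₊`, then `N' = U N U⁻¹` for some isometry `U` of `(V, B)`
preserving `V₊` and `V₋`. -/
theorem stmt12 {V : Type*} [AddCommGroup V] [Module ℂ V] [FiniteDimensional ℂ V]
    (B : LinearMap.BilinForm ℂ V) (hB : B.Nondegenerate)
    (hBsa : (∀ x y : V, B x y = B y x) ∨ (∀ x y : V, B x y = - B y x))
    (Vp Vm : Submodule ℂ V) (hcompl : IsCompl Vp Vm)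
    (hVp : ∀ x ∈ Vp, ∀ y ∈ Vp, B x y = 0)
    (hVm : ∀ x ∈ Vm, ∀ y ∈ Vm, B x y = 0)
    (N N' : V →ₗ[ℂ] V)
    (hN : ∀ x y : V, B (N x) y = - B x (N y))
    (hN' : ∀ x y : V, B (N' x) y = - B x (N' y))
    (hNVp : ∀ x ∈ Vp, N x ∈ Vp) (hNVm : ∀ x ∈ Vm, N x ∈ Vm)
    (hN'Vp : ∀ x ∈ Vp, N' x ∈ Vp) (hN'Vm : ∀ x ∈ Vm, N' x ∈ Vm)
    (Up : ↥Vp ≃ₗ[ℂ] ↥Vp)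
    (hUp : ∀ (x : ↥Vp) (h : N ↑(Up.symm x) ∈ Vp),
      N' ↑x = ↑(Up ⟨N ↑(Up.symm x), h⟩)) :
    ∃ U : V ≃ₗ[ℂ] V, (∀ x y : V, B (U x) (U y) = B x y) ∧
      Submodule.map U.toLinearMap Vp = Vp ∧
      Submodule.map U.toLinearMap Vm = Vm ∧
      ∀ x : V, N' x = U (N (U.symm x)) :=
  stmt12_general B hB hBsa Vp Vm hcompl hVp hVm N N' hN hN' hNVp hNVm hN'Vm Up hUp
end

section
/- Let g be a complex Lie algebra equipped with a symmetric bilinear form B, let X₀ ∈ g satisfy B(X₀, X₀) = 0, and let C₀ be a linear endomorphism of g that is skew-symmetric with respect to B and satisfies C₀(X₀) = 0. Suppose the Lie bracket of g is given by ⁅X, Y⁆ = B(X₀, X) • C₀(Y) − B(X₀, Y) • C₀(X) + B(C₀(X), Y) • X₀ for all X, Y ∈ g. Then g is solvable. (This is the bracket of the even part of a singular quadratic Lie superalgebra of type S₁, proved solvable in Section 5.) -/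
/-!
The linear form `f = B X₀` kills every bracket, because `f (C₀ y) = -B (C₀ X₀) y = 0` and
`f X₀ = 0`. On `ker f` the bracket reduces to `B (C₀ x) y • X₀`, and brackets of multiples of `X₀`
vanish. So the derived series descends `g ⊇ ker f ⊇ span {X₀} ⊇ 0`.
-/

namespace LieAlgebra

variable {R L : Type*} [CommRing R] [LieRing L] [LieAlgebra R L]

theorem derivedSeries_succ_le_of_forall_lie_mem {k : ℕ} {p : Submodule R L}
    (h : ∀ x ∈ derivedSeries R L k, ∀ y ∈ derivedSeries R L k, ⁅x, y⁆ ∈ p) :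
    (derivedSeries R L (k + 1) : Submodule R L) ≤ p := by
  rw [LieIdeal.toLieSubalgebra_toSubmodule, derivedSeries_def, derivedSeriesOfIdeal_succ,
    LieSubmodule.lieIdeal_oper_eq_linear_span',
    Submodule.span_le]
  rintro _ ⟨x, hx, y, hy, rfl⟩
  exact h x hx y hy

end LieAlgebra

section SingularBracket

variable {R L : Type*} [CommRing R] [LieRing L] [LieAlgebra R L]
  {B : LinearMap.BilinForm R L} {X0 : L} {C0 : L →ₗ[R] L}

theorem bilinForm_apply_map_eq_zero_of_skew (hC0skew : ∀ x y : L, B (C0 x) y = - B x (C0 y))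
    (hC0X0 : C0 X0 = 0) (y : L) : B X0 (C0 y) = 0 := by
  simpa [hC0X0] using (hC0skew X0 y).symm

theorem bilinForm_apply_lie_eq_zero
    (hbracket : ∀ X Y : L, ⁅X, Y⁆ = B X0 X • C0 Y - B X0 Y • C0 X + B (C0 X) Y • X0)
    (hX0 : B X0 X0 = 0) (hBC0 : ∀ y : L, B X0 (C0 y) = 0) (x y : L) :
    B X0 ⁅x, y⁆ = 0 := by
  simp [hbracket, hBC0, hX0]

theorem lie_mem_span_of_bilinForm_eq_zero
    (hbracket : ∀ X Y : L, ⁅X, Y⁆ = B X0 X • C0 Y - B X0 Y • C0 X + B (C0 X) Y • X0)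
    {x y : L} (hx : B X0 x = 0) (hy : B X0 y = 0) : ⁅x, y⁆ ∈ R ∙ X0 := by
  rw [hbracket, hx, hy, zero_smul, zero_smul, sub_zero, zero_add]
  exact Submodule.smul_mem _ _ (Submodule.mem_span_singleton_self X0)

theorem lie_eq_zero_of_mem_span
    (hbracket : ∀ X Y : L, ⁅X, Y⁆ = B X0 X • C0 Y - B X0 Y • C0 X + B (C0 X) Y • X0)
    (hX0 : B X0 X0 = 0) (hC0X0 : C0 X0 = 0) {x y : L} (hx : x ∈ R ∙ X0) (hy : y ∈ R ∙ X0) :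
    ⁅x, y⁆ = 0 := by
  obtain ⟨a, rfl⟩ := Submodule.mem_span_singleton.mp hx
  obtain ⟨b, rfl⟩ := Submodule.mem_span_singleton.mp hy
  simp [hbracket, hX0, hC0X0]

end SingularBracket

open LieAlgebra in
theorem stmt16_general {g : Type*} [LieRing g] [LieAlgebra ℂ g]
    (B : LinearMap.BilinForm ℂ g)
    (X0 : g) (hX0 : B X0 X0 = 0)
    (C0 : g →ₗ[ℂ] g)
    (hC0skew : ∀ x y : g, B (C0 x) y = - B x (C0 y))
    (hC0X0 : C0 X0 = 0)
    (hbracket : ∀ X Y : g,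
      ⁅X, Y⁆ = B X0 X • C0 Y - B X0 Y • C0 X + B (C0 X) Y • X0) :
    LieAlgebra.IsSolvable g := by
  have hBC0 := bilinForm_apply_map_eq_zero_of_skew hC0skew hC0X0
  have hD1 : (derivedSeries ℂ g 1 : Submodule ℂ g) ≤ LinearMap.ker (B X0) :=
    derivedSeries_succ_le_of_forall_lie_mem fun x _ y _ ↦
      bilinForm_apply_lie_eq_zero hbracket hX0 hBC0 x y
  have hD2 : (derivedSeries ℂ g 2 : Submodule ℂ g) ≤ ℂ ∙ X0 :=
    derivedSeries_succ_le_of_forall_lie_mem fun _ hx _ hy ↦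
      lie_mem_span_of_bilinForm_eq_zero hbracket (hD1 hx) (hD1 hy)
  have hD3 : (derivedSeries ℂ g 3 : Submodule ℂ g) ≤ ⊥ :=
    derivedSeries_succ_le_of_forall_lie_mem fun _ hx _ hy ↦
      (lie_eq_zero_of_mem_span hbracket hX0 hC0X0 (hD2 hx) (hD2 hy) :)
  exact IsSolvable.mk (R := ℂ) (k := 3) <| eq_bot_iff.mpr fun z hz ↦
    (LieSubmodule.mem_bot z).mpr ((Submodule.mem_bot ℂ).mp (hD3 hz))

/-- A complex Lie algebra whose bracket has the form
`⁅X, Y⁆ = B(X₀, X) • C₀(Y) − B(X₀, Y) • C₀(X) + B(C₀(X), Y) • X₀`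
with `B` symmetric, `B(X₀,X₀) = 0`, `C₀` skew-symmetric and `C₀(X₀) = 0`,
is solvable. -/
theorem stmt16 {g : Type*} [LieRing g] [LieAlgebra ℂ g] [FiniteDimensional ℂ g]
    (B : LinearMap.BilinForm ℂ g) (hBsymm : ∀ x y : g, B x y = B y x)
    (X0 : g) (hX0 : B X0 X0 = 0)
    (C0 : g →ₗ[ℂ] g)
    (hC0skew : ∀ x y : g, B (C0 x) y = - B x (C0 y))
    (hC0X0 : C0 X0 = 0)
    (hbracket : ∀ X Y : g,
      ⁅X, Y⁆ = B X0 X • C0 Y - B X0 Y • C0 X + B (C0 X) Y • X0) :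
    LieAlgebra.IsSolvable g :=
  stmt16_general B X0 hX0 C0 hC0skew hC0X0 hbracket
end

section
/- Let (g, B) be a non-abelian quadratic Lie algebra over ℂ. Then there exist Lie ideals z and l of g such that: g = z ⊕ l as vector spaces with B(z, l) = 0; z is central, i.e. ⁅z, g⁆ = 0; the restrictions of B to z × z and to l × l are nondegenerate; l is non-abelian; and the center of l is totally isotropic, i.e. the center of l is contained in the derived ideal ⁅l, l⁆. -/
/-!
The center `Z` of `g` is the orthogonal of the derived ideal `⁅g, g⁆`, so the radical of `B`
on `Z` is `Z ∩ ⁅g, g⁆`. Any complement `z` of this radical inside `Z` is a central ideal on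
which `B` is nondegenerate, and its orthogonal `l` is an ideal complementary to it. As `z` is
central, `⁅l, l⁆ = ⁅g, g⁆`, and an element of `l` central in `l` is central in `g`; such an
element lies in `Z ∩ l`, which the modular law identifies with the radical `Z ∩ ⁅g, g⁆`.
-/

open LinearMap (BilinForm)

namespace LinearMap.BilinForm

section CommRing

variable {R M : Type*} [CommRing R] [AddCommGroup M] [Module R M]

theorem nondegenerate_restrict_of_disjoint_of_sup_eq {B : BilinForm R M} (hB : B.IsRefl)
    {W z : Submodule R M} (hdisj : Disjoint (W ⊓ B.orthogonal W) z)
    (hsup : W ⊓ B.orthogonal W ⊔ z = W) : (B.restrict z).Nondegenerate := by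
  refine B.nondegenerate_restrict_of_disjoint_orthogonal hB ?_
  rw [Submodule.disjoint_def]
  intro x hxz hx_orth
  have hxW : x ∈ W := hsup ▸ Submodule.mem_sup_right hxz
  have hxW_orth : x ∈ B.orthogonal W := by
    intro w hw
    rw [← hsup, Submodule.mem_sup] at hw
    obtain ⟨r, hr, a, ha, rfl⟩ := hw
    have hrx : B r x = 0 := hB _ _ (hr.2 x hxW)
    show B (r + a) x = 0
    rw [map_add, LinearMap.add_apply, hrx, hx_orth a ha, add_zero]
  exact Submodule.disjoint_def.1 hdisj x ⟨hxW, hxW_orth⟩ hxz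

theorem lieInvariant_of_apply_lie_left {L : Type*} [LieRing L] [LieAlgebra R L]
    {B : BilinForm R L} (h : ∀ x y z : L, B ⁅x, y⁆ z = B x ⁅y, z⁆) : B.lieInvariant L :=
  fun x y z => by rw [← lie_skew, map_neg, LinearMap.neg_apply, h]

end CommRing

theorem nondegenerate_restrict_orthogonal {K V : Type*} [Field K] [AddCommGroup V] [Module K V]
    [FiniteDimensional K V] {B : BilinForm K V} (hB : B.Nondegenerate) (hrefl : B.IsRefl)
    {W : Submodule K V} (hW : (B.restrict W).Nondegenerate) :
    (B.restrict (B.orthogonal W)).Nondegenerate := by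
  rw [restrict_nondegenerate_iff_isCompl_orthogonal hrefl, orthogonal_orthogonal hB hrefl]
  exact (isCompl_orthogonal_of_restrict_nondegenerate hrefl hW).symm

end LinearMap.BilinForm

namespace LieAlgebra

section CommRing

variable {R L : Type*} [CommRing R] [LieRing L] [LieAlgebra R L]

theorem lie_eq_zero_of_mem_center_left {a : L} (ha : a ∈ center R L) (x : L) :
    ⁅a, x⁆ = 0 := by
  rw [← lie_skew, ha x, neg_zero]

def idealOfLeCenter (z : Submodule R L) (hz : z ≤ (center R L).toSubmodule) :
    LieIdeal R L where
  toSubmodule := z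
  lie_mem {x m} hm := by
    rw [show ⁅x, m⁆ = 0 from hz hm x]
    exact z.zero_mem

section CentralComplement

variable {z l : LieIdeal R L} (hz : z ≤ center R L) (hzl : z ⊔ l = ⊤)
include hz hzl

theorem lie_self_eq_of_sup_eq_top_of_le_center : ⁅l, l⁆ = ⁅(⊤ : LieIdeal R L), ⊤⁆ := by
  have hz0 : ∀ I : LieIdeal R L, ⁅z, I⁆ = ⊥ := fun I =>
    (LieSubmodule.lie_eq_bot_iff ..).2 fun a ha x _ => lie_eq_zero_of_mem_center_left (hz ha) x
  rw [← hzl, LieSubmodule.sup_lie, LieSubmodule.lie_sup, LieSubmodule.lie_sup,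
    LieSubmodule.lie_comm l z, hz0, hz0]
  simp

theorem mem_center_of_forall_lie_eq_zero {x : L} (hx : ∀ y ∈ l, ⁅x, y⁆ = 0) :
    x ∈ center R L := by
  intro y
  obtain ⟨a, ha, b, hb, rfl⟩ := (LieSubmodule.mem_sup ..).1 (hzl ▸ LieSubmodule.mem_top y)
  rw [add_lie, lie_eq_zero_of_mem_center_left (hz ha), zero_add, ← lie_skew, hx b hb, neg_zero]

theorem exists_lie_ne_zero_of_sup_eq_top_of_le_center (h : ∃ x y : L, ⁅x, y⁆ ≠ 0) :
    ∃ a ∈ l, ∃ b ∈ l, ⁅a, b⁆ ≠ 0 := by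
  obtain ⟨x, y, hxy⟩ := h
  have hmem : ⁅x, y⁆ ∈ ⁅l, l⁆ := lie_self_eq_of_sup_eq_top_of_le_center hz hzl ▸
    LieSubmodule.lie_mem_lie (LieSubmodule.mem_top x) (LieSubmodule.mem_top y)
  by_contra! h
  rw [(LieSubmodule.lie_eq_bot_iff ..).2 h, LieSubmodule.mem_bot] at hmem
  exact hxy hmem

end CentralComplement

theorem InvariantForm.orthogonal_lie_top_top {B : BilinForm R L} (hB : B.Nondegenerate)
    (hinv : B.lieInvariant L) :
    orthogonal B hinv ⁅(⊤ : LieIdeal R L), ⊤⁆ = center R L := by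
  ext x
  rw [mem_orthogonal, LieModule.mem_maxTrivSubmodule]
  constructor
  · intro h y
    refine hB.2 _ fun w => ?_
    rw [← neg_eq_zero, ← hinv]
    exact h _ (LieSubmodule.lie_mem_lie (LieSubmodule.mem_top y) (LieSubmodule.mem_top w))
  · intro h d hd
    rw [← LieSubmodule.mem_toSubmodule, LieSubmodule.lieIdeal_oper_eq_linear_span'] at hd
    refine (Submodule.span_le (p := LinearMap.ker (B.flip x))).2 ?_ hd
    rintro _ ⟨y, -, w, -, rfl⟩
    rw [SetLike.mem_coe, LinearMap.mem_ker]
    change B ⁅y, w⁆ x = 0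
    rw [hinv, h y, map_zero, neg_zero]

end CommRing

namespace InvariantForm

variable {K L : Type*} [Field K] [LieRing L] [LieAlgebra K L] [FiniteDimensional K L]
  {B : BilinForm K L} (hB : B.Nondegenerate) (hrefl : B.IsRefl) (hinv : B.lieInvariant L)
include hB hrefl hinv

theorem orthogonal_center :
    B.orthogonal (center K L).toSubmodule =
      (⁅(⊤ : LieIdeal K L), ⊤⁆ : LieIdeal K L).toSubmodule := by
  rw [← orthogonal_lie_top_top hB hinv, orthogonal_toSubmodule,
    BilinForm.orthogonal_orthogonal hB hrefl]

theorem exists_le_center_nondegenerate :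
    ∃ z : Submodule K L, z ≤ (center K L).toSubmodule ∧ (B.restrict z).Nondegenerate ∧
      (center K L).toSubmodule ⊓ B.orthogonal z ≤
        (⁅(⊤ : LieIdeal K L), ⊤⁆ : LieIdeal K L).toSubmodule := by
  set Z := (center K L).toSubmodule
  set rad := Z ⊓ B.orthogonal Z
  obtain ⟨z, hdisj, hsup⟩ :=
    IsModularLattice.exists_disjoint_and_sup_eq (inf_le_left : rad ≤ Z)
  have hz : z ≤ Z := hsup ▸ le_sup_right
  have hnd : (B.restrict z).Nondegenerate :=
    BilinForm.nondegenerate_restrict_of_disjoint_of_sup_eq hrefl hdisj hsup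
  refine ⟨z, hz, hnd, ?_⟩
  calc Z ⊓ B.orthogonal z = (rad ⊔ z) ⊓ B.orthogonal z := by rw [hsup]
    _ = rad ⊔ z ⊓ B.orthogonal z :=
      sup_inf_assoc_of_le _ (inf_le_right.trans (BilinForm.orthogonal_le hz))
    _ = rad := by
      rw [(BilinForm.isCompl_orthogonal_of_restrict_nondegenerate hrefl hnd).inf_eq_bot,
        sup_bot_eq]
    _ ≤ B.orthogonal Z := inf_le_right
    _ = _ := orthogonal_center hB hrefl hinv

end InvariantForm

end LieAlgebra

open LieAlgebra LinearMap.BilinForm in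
/-- A non-abelian quadratic Lie algebra over `ℂ` decomposes as an
orthogonal direct sum `g = z ⊕ l` of ideals, where `z` is central, the restrictions
of `B` to `z` and `l` are nondegenerate, `l` is non-abelian, and the center of `l` is
totally isotropic, i.e. contained in the derived ideal `⁅l, l⁆`. -/
theorem stmt19 {g : Type*} [LieRing g] [LieAlgebra ℂ g] [FiniteDimensional ℂ g]
    (B : LinearMap.BilinForm ℂ g) (hB : B.Nondegenerate)
    (hBsymm : ∀ x y : g, B x y = B y x)
    (hBinv : ∀ x y z : g, B ⁅x, y⁆ z = B x ⁅y, z⁆)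
    (hnonab : ∃ x y : g, ⁅x, y⁆ ≠ 0) :
    ∃ z l : LieIdeal ℂ g,
      IsCompl (z : Submodule ℂ g) (l : Submodule ℂ g) ∧
      (∀ a ∈ z, ∀ b ∈ l, B a b = 0) ∧
      (∀ a ∈ z, ∀ x : g, ⁅a, x⁆ = 0) ∧
      (B.restrict (z : Submodule ℂ g)).Nondegenerate ∧
      (B.restrict (l : Submodule ℂ g)).Nondegenerate ∧
      (∃ a ∈ l, ∃ b ∈ l, ⁅a, b⁆ ≠ 0) ∧
      (∀ x ∈ l, (∀ y ∈ l, ⁅x, y⁆ = 0) →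
        x ∈ Submodule.span ℂ {m : g | ∃ a ∈ l, ∃ b ∈ l, m = ⁅a, b⁆}) := by
  have hinv : B.lieInvariant g := lieInvariant_of_apply_lie_left hBinv
  have hrefl : B.IsRefl := fun x y h => (hBsymm y x).trans h
  obtain ⟨z₀, hz₀, hnd, hrad⟩ := InvariantForm.exists_le_center_nondegenerate hB hrefl hinv
  set z := idealOfLeCenter z₀ hz₀
  set l := InvariantForm.orthogonal B hinv z
  have hzl : IsCompl z.toSubmodule l.toSubmodule :=
    (restrict_nondegenerate_iff_isCompl_orthogonal hrefl).1 hnd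
  have hcod : z ⊔ l = ⊤ :=
    codisjoint_iff.1 (LieSubmodule.codisjoint_toSubmodule.1 hzl.codisjoint)
  refine ⟨z, l, hzl, fun a ha b hb => hb a ha,
    fun a ha => lie_eq_zero_of_mem_center_left (hz₀ ha), hnd,
    nondegenerate_restrict_orthogonal hB hrefl hnd,
    exists_lie_ne_zero_of_sup_eq_top_of_le_center hz₀ hcod hnonab, fun x hxl hx => ?_⟩
  have hx' : x ∈ (⁅l, l⁆ : LieIdeal ℂ g).toSubmodule :=
    lie_self_eq_of_sup_eq_top_of_le_center hz₀ hcod ▸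
      hrad ⟨mem_center_of_forall_lie_eq_zero hz₀ hcod hx, hxl⟩
  rw [LieSubmodule.lieIdeal_oper_eq_linear_span'] at hx'
  simpa only [eq_comm] using hx'
end
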